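/- arXiv:2506.12625 — 8 statements merged into one kernel-verified Lean document; each statement's English description precedes it below -/
import Mathlib

section
/- Let α ∈ [0, π), let d be a unit vector in ℝ², and let p₀, p₁, …, pₙ be points in the Euclidean plane ℝ² such that for every k with 0 ≤ k < n the vector p_{k+1} − p_k is nonzero and the angle between p_{k+1} − p_k and d is at most α/2. Then the total length of the polygonal path satisfies ∑_{k=0}^{n−1} ‖p_{k+1} − p_k‖ ≤ ‖pₙ − p₀‖ / cos(α/2). -/
/-- An angle-monotone path of width `α` (all edge vectors within angle `α/2`
of a common unit direction `d`) has length at most `‖pₙ − p₀‖ / cos (α/2)`. -/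
theorem angle_monotone_path_length
    (α : ℝ) (hα : α ∈ Set.Ico 0 Real.pi)
    (d : EuclideanSpace ℝ (Fin 2)) (hd : ‖d‖ = 1)
    (n : ℕ) (p : ℕ → EuclideanSpace ℝ (Fin 2))
    (h : ∀ k < n, p (k + 1) - p k ≠ 0 ∧
      InnerProductGeometry.angle (p (k + 1) - p k) d ≤ α / 2) :
    ∑ k ∈ Finset.range n, ‖p (k + 1) - p k‖ ≤ ‖p n - p 0‖ / Real.cos (α / 2) := by
  have hc : 0 < Real.cos (α / 2) := by
    apply Real.cos_pos_of_mem_Ioo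
    constructor
    · linarith [hα.1, Real.pi_pos]
    · linarith [hα.2]
  rw [le_div_iff₀ hc]
  have key : ∀ k < n, ‖p (k + 1) - p k‖ * Real.cos (α / 2) ≤
      inner ℝ (p (k + 1) - p k) d := by
    intro k hk
    obtain ⟨hne, hang⟩ := h k hk
    have hdne : d ≠ 0 := by simpa [hd] using (norm_ne_zero_iff.mp (by rw [hd]; norm_num))
    have hcos := InnerProductGeometry.cos_angle_mul_norm_mul_norm (p (k + 1) - p k) d
    have hangle_nonneg := InnerProductGeometry.angle_nonneg (p (k + 1) - p k) d
    have hangle_pi := InnerProductGeometry.angle_le_pi (p (k + 1) - p k) d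
    have hcosle : Real.cos (α / 2) ≤ Real.cos (InnerProductGeometry.angle (p (k + 1) - p k) d) := by
      apply Real.cos_le_cos_of_nonneg_of_le_pi hangle_nonneg _ hang
      linarith [hα.2]
    calc ‖p (k + 1) - p k‖ * Real.cos (α / 2)
        ≤ ‖p (k + 1) - p k‖ * Real.cos (InnerProductGeometry.angle (p (k + 1) - p k) d) := by
          apply mul_le_mul_of_nonneg_left hcosle (norm_nonneg _)
      _ = inner ℝ (p (k + 1) - p k) d := by
          rw [mul_comm]; rw [← hcos, hd]; ring
  have hsum : (∑ k ∈ Finset.range n, ‖p (k + 1) - p k‖) * Real.cos (α / 2) ≤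
      inner ℝ (p n - p 0) d := by
    have tele : (p n - p 0 : EuclideanSpace ℝ (Fin 2)) =
        ∑ k ∈ Finset.range n, (p (k + 1) - p k) := by
      rw [Finset.sum_range_sub]
    rw [tele, sum_inner, Finset.sum_mul]
    exact Finset.sum_le_sum fun k hk => key k (Finset.mem_range.mp hk)
  refine hsum.trans ?_
  calc (inner ℝ (p n - p 0) d : ℝ) ≤ ‖p n - p 0‖ * ‖d‖ := real_inner_le_norm _ _
    _ = ‖p n - p 0‖ := by rw [hd, mul_one]
end

section
/- For every ε > 0 there exist a finite set S ⊆ ℝ² in general position and two points a, b ∈ S such that every path from a to b in the TD_{θ₁,θ₂}-Delaunay graph G of S has total length at least (1/sin(θ₁/2) − ε)·‖a − b‖. In particular, the worst-case spanning ratio of TD_{θ₁,θ₂}-Delaunay graphs is at least 1/sin(θ₁/2). -/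
noncomputable section

open RealInnerProductSpace

/-- The Euclidean plane. -/
abbrev Pt : Type := EuclideanSpace ℝ (Fin 2)

/-- The scaled translate `r•Δ + w` of a set `Δ`. -/
def scaledTranslate (Δ : Set Pt) (r : ℝ) (w : Pt) : Set Pt :=
  (fun x => r • x + w) '' Δ

/-- The triangle with corners `τ 0, τ 1, τ 2`. -/
def Tri (τ : Fin 3 → Pt) : Set Pt := convexHull ℝ (Set.range τ)

/-- Adjacency in the `Δ`-Delaunay graph of `S`: distinct `u, v ∈ S` are adjacent exactly
when some scaled translate of `Δ` has `u` and `v` on its boundary and no point of `S`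
in its interior. -/
def TDAdj (Δ : Set Pt) (S : Set Pt) (u v : Pt) : Prop :=
  u ∈ S ∧ v ∈ S ∧ u ≠ v ∧
    ∃ r : ℝ, 0 < r ∧ ∃ w : Pt,
      u ∈ frontier (scaledTranslate Δ r w) ∧
      v ∈ frontier (scaledTranslate Δ r w) ∧
      ∀ x ∈ S, x ∉ interior (scaledTranslate Δ r w)

/-- Length of a polygonal path given as a list of vertices. -/
def pathLength : List Pt → ℝ
  | [] => 0
  | [_] => 0
  | a :: b :: rest => ‖a - b‖ + pathLength (b :: rest)

/-- `P` is a path in the graph with adjacency `Adj` from `a` to `b`. -/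
def IsPathFrom (Adj : Pt → Pt → Prop) (a b : Pt) (P : List Pt) : Prop :=
  P ≠ [] ∧ P.head? = some a ∧ P.getLast? = some b ∧ P.Chain' Adj

/-- Graph distance: infimum of lengths of paths from `u` to `v`. -/
def dG (Adj : Pt → Pt → Prop) (u v : Pt) : ℝ :=
  sInf { L : ℝ | ∃ P : List Pt, IsPathFrom Adj u v P ∧ pathLength P = L }

/-- `S` is in general position: no two points of `S` determine a line parallel to a side
of the triangle with corners `τ 0, τ 1, τ 2`. -/
def GenPos (τ : Fin 3 → Pt) (S : Set Pt) : Prop :=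
  ∀ u ∈ S, ∀ v ∈ S, u ≠ v → ∀ i : Fin 3, ∀ c : ℝ, v - u ≠ c • (τ (i + 1) - τ i)

/-- The inner expression in the definition of `C(θ₁,θ₂)`. -/
def Cexpr (θ : Fin 3 → ℝ) (j : Fin 3) (α : ℝ) : ℝ :=
  Real.sin (θ j - α) / Real.sin (θ (j + 1)) + Real.sin α / Real.sin (θ (j - 1)) +
    min (Real.sin α / Real.sin (θ (j - 1)) + Real.sin (α + θ (j - 1)) / Real.sin (θ (j + 1)))
        (Real.sin (θ j - α) / Real.sin (θ (j + 1)) +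
          Real.sin (α + θ (j - 1)) / Real.sin (θ (j - 1)))

/-- `C(θ₁,θ₂)`: the maximum of `Cexpr θ j α` over `j ∈ {1,2,3}` and `α ∈ [0, θⱼ]`. -/
def Cval (θ : Fin 3 → ℝ) : ℝ :=
  sSup { x : ℝ | ∃ j : Fin 3, ∃ α : ℝ, α ∈ Set.Icc 0 (θ j) ∧ x = Cexpr θ j α }

/-- The positive cone `C_{p,i}`. -/
def posCone (τ : Fin 3 → Pt) (p : Pt) (i : Fin 3) : Set Pt :=
  { q | ∃ s r : ℝ, 0 ≤ s ∧ 0 ≤ r ∧ q = p + s • (τ (i + 1) - τ i) + r • (τ (i - 1) - τ i) }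

/-- The negative cone `C̄_{p,i}`. -/
def negCone (τ : Fin 3 → Pt) (p : Pt) (i : Fin 3) : Set Pt :=
  { q | ∃ s r : ℝ, 0 ≤ s ∧ 0 ≤ r ∧ q = p - s • (τ (i + 1) - τ i) - r • (τ (i - 1) - τ i) }

/-- Vertices reachable from `s` by a path with at most `k` edges. -/
def ReachK (Adj : Pt → Pt → Prop) (k : ℕ) (s : Pt) : Set Pt :=
  { v | ∃ P : List Pt, IsPathFrom Adj s v P ∧ P.length ≤ k + 1 }

/-- Any point whose barycentric coordinates strictly dominate the minimum of those of `u` and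
`v` lies in the interior of every scaled translate of the triangle containing `u` and `v`. -/
lemma block_interior (τ : Fin 3 → Pt) (B : AffineBasis (Fin 3) ℝ Pt) (hBτ : ⇑B = τ)
    {r : ℝ} (hr : 0 < r) (w u v x : Pt)
    (hu : u ∈ scaledTranslate (Tri τ) r w) (hv : v ∈ scaledTranslate (Tri τ) r w)
    (hx : ∀ i, min (B.coord i u) (B.coord i v) < B.coord i x) :
    x ∈ interior (scaledTranslate (Tri τ) r w) := by
  classical
  subst hBτ
  have key : ∀ (i : Fin 3) (p : Pt),
      B.coord i (r • p + w) = r * B.coord i p + (B.coord i w - r * B.coord i 0) := by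
    intro i p
    have h1 : B.coord i (r • p + w) = (B.coord i).linear (r • p) + B.coord i w := by
      have := (B.coord i).map_vadd w (r • p)
      simpa [vadd_eq_add] using this
    have h2 : B.coord i p = (B.coord i).linear p + B.coord i 0 := by
      have := (B.coord i).map_vadd 0 p
      simpa [vadd_eq_add] using this
    rw [h1, map_smul]
    simp only [smul_eq_mul]
    rw [show (B.coord i).linear p = B.coord i p - B.coord i 0 by linarith]
    ring
  have hTri : Tri ⇑B = {y : Pt | ∀ i, 0 ≤ B.coord i y} := B.convexHull_eq_nonneg_coord
  have hmem : ∀ y ∈ scaledTranslate (Tri ⇑B) r w, ∀ i,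
      B.coord i w - r * B.coord i 0 ≤ B.coord i y := by
    rintro y ⟨p, hp, rfl⟩ i
    have hp' : 0 ≤ B.coord i p := by rw [hTri] at hp; exact hp i
    rw [key]
    nlinarith
  let h : Pt ≃ₜ Pt := (Homeomorph.smulOfNeZero r hr.ne').trans (Homeomorph.addRight w)
  have himg : scaledTranslate (Tri ⇑B) r w = h '' Tri ⇑B := rfl
  have hint : interior (scaledTranslate (Tri ⇑B) r w) = h '' interior (Tri ⇑B) := by
    rw [himg, h.image_interior]
  rw [hint, show Tri ⇑B = convexHull ℝ (Set.range ⇑B) from rfl, B.interior_convexHull]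
  refine ⟨r⁻¹ • (x - w), ?_, ?_⟩
  · intro i
    have hxw : r • (r⁻¹ • (x - w)) + w = x := by
      rw [smul_smul, mul_inv_cancel₀ hr.ne']; simp
    have hk := key i (r⁻¹ • (x - w))
    rw [hxw] at hk
    have hmin : B.coord i w - r * B.coord i 0 ≤ min (B.coord i u) (B.coord i v) :=
      le_min (hmem u hu i) (hmem v hv i)
    have := hx i
    nlinarith
  · show r • (r⁻¹ • (x - w)) + w = x
    rw [smul_smul, mul_inv_cancel₀ hr.ne']; simp

lemma pathLength_lb (Adj : Pt → Pt → Prop) (φ : Pt → ℝ)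
    (h : ∀ u v, Adj u v → |φ u - φ v| ≤ ‖u - v‖) :
    ∀ (P : List Pt) (x y : Pt), List.Chain' Adj (x :: P) →
      (x :: P).getLast? = some y → |φ x - φ y| ≤ pathLength (x :: P) := by
  intro P
  induction P with
  | nil =>
    intro x y _ hl
    simp only [List.getLast?_singleton, Option.some.injEq] at hl
    subst hl
    simp [pathLength]
  | cons z P' ih =>
    intro x y hc hl
    change List.IsChain Adj (x :: z :: P') at hc; rw [List.isChain_cons_cons] at hc
    rw [List.getLast?_cons_cons] at hl
    have h1 := h x z hc.1
    have h2 := ih z y hc.2 hl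
    have h3 : pathLength (x :: z :: P') = ‖x - z‖ + pathLength (z :: P') := rfl
    have habs := abs_sub_le (φ x) (φ z) (φ y)
    rw [h3]; linarith

set_option maxHeartbeats 2000000

/-- Lower bound on the spanning ratio of `TD_{θ₁,θ₂}`-Delaunay graphs:
for every `ε > 0` there is a finite point set `S` in general position and `a, b ∈ S`
such that every path from `a` to `b` in the graph has length at least
`(1/sin(θ₁/2) − ε)·‖a − b‖`. -/

theorem spanning_ratio_lower_bound
    (θ : Fin 3 → ℝ) (hθ0 : 0 < θ 0) (hθ01 : θ 0 ≤ θ 1) (hθ12 : θ 1 ≤ θ 2)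
    (hsum : θ 0 + θ 1 + θ 2 = Real.pi)
    (τ : Fin 3 → Pt) (hncol : ¬ Collinear ℝ (Set.range τ))
    (hangle : ∀ j : Fin 3, EuclideanGeometry.angle (τ (j + 1)) (τ j) (τ (j - 1)) = θ j)
    (ε : ℝ) (hε : 0 < ε) :
    ∃ S : Finset Pt, GenPos τ ↑S ∧ ∃ a ∈ S, ∃ b ∈ S, a ≠ b ∧
      ∀ P : List Pt, IsPathFrom (TDAdj (Tri τ) ↑S) a b P →
        (1 / Real.sin (θ 0 / 2) - ε) * ‖a - b‖ ≤ pathLength P := by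
  classical
  -- basic angle facts
  have hθ1 : 0 < θ 1 := lt_of_lt_of_le hθ0 hθ01
  have hθ2 : 0 < θ 2 := lt_of_lt_of_le hθ1 hθ12
  have hπ : 0 < Real.pi := Real.pi_pos
  have hθ0π : θ 0 < Real.pi := by linarith
  set s : ℝ := Real.sin (θ 0 / 2) with hs_def
  have hs_pos : 0 < s := Real.sin_pos_of_pos_of_lt_pi (by linarith) (by linarith)
  have hs_le : s ≤ 1 := Real.sin_le_one _
  have hcos2 : Real.cos (θ 0) = 1 - 2 * s ^ 2 := by
    have h := Real.cos_two_mul (θ 0 / 2)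
    have h2 := Real.sin_sq_add_cos_sq (θ 0 / 2)
    rw [show 2 * (θ 0 / 2) = θ 0 by ring] at h
    rw [hs_def]; linarith only [h, h2]
  -- affine basis
  have hai : AffineIndependent ℝ τ := affineIndependent_iff_not_collinear.mpr hncol
  have htot : affineSpan ℝ (Set.range τ) = ⊤ := by
    rw [hai.affineSpan_eq_top_iff_card_eq_finrank_add_one]
    simp [finrank_euclideanSpace_fin]
  obtain ⟨B, hBτ⟩ : ∃ B : AffineBasis (Fin 3) ℝ Pt, ⇑B = τ := ⟨⟨τ, hai, htot⟩, rfl⟩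
  have coordτ : ∀ i j : Fin 3, B.coord i (τ j) = if i = j then 1 else 0 := by
    intro i j; rw [← hBτ]; exact B.coord_apply i j
  -- side vectors
  have hτ02 : τ 0 ≠ τ 2 := hai.injective.ne (by decide)
  have hτ10 : τ 1 ≠ τ 0 := hai.injective.ne (by decide)
  set n1 : ℝ := ‖τ 0 - τ 2‖ with hn1_def
  set n2 : ℝ := ‖τ 1 - τ 0‖ with hn2_def
  have hn1 : 0 < n1 := by rw [hn1_def]; exact norm_sub_pos_iff.mpr hτ02
  have hn2 : 0 < n2 := by rw [hn2_def]; exact norm_sub_pos_iff.mpr hτ10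
  set e1 : Pt := n1⁻¹ • (τ 0 - τ 2) with he1_def
  set e2 : Pt := n2⁻¹ • (τ 1 - τ 0) with he2_def
  have he1n : ‖e1‖ = 1 := by
    rw [he1_def, norm_smul, Real.norm_eq_abs, abs_of_pos (inv_pos.mpr hn1), ← hn1_def]
    field_simp
  have he2n : ‖e2‖ = 1 := by
    rw [he2_def, norm_smul, Real.norm_eq_abs, abs_of_pos (inv_pos.mpr hn2), ← hn2_def]
    field_simp
  -- inner product
  have hcosθ : ⟪τ 1 - τ 0, τ 2 - τ 0⟫ = Real.cos (θ 0) * (n2 * n1) := by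
    have hang : InnerProductGeometry.angle (τ 1 - τ 0) (τ 2 - τ 0) = θ 0 := by
      have h0 := hangle 0
      rw [show (0 : Fin 3) + 1 = 1 from rfl, show (0 : Fin 3) - 1 = 2 from rfl] at h0
      simpa [EuclideanGeometry.angle, vsub_eq_sub] using h0
    have h := InnerProductGeometry.cos_angle_mul_norm_mul_norm (τ 1 - τ 0) (τ 2 - τ 0)
    rw [hang] at h
    rw [← h, show ‖τ 2 - τ 0‖ = n1 by rw [hn1_def]; exact (norm_sub_rev _ _).symm, ← hn2_def]
  have hE : ⟪e1, e2⟫ = -Real.cos (θ 0) := by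
    rw [he1_def, he2_def, real_inner_smul_left, real_inner_smul_right,
      show τ 0 - τ 2 = -(τ 2 - τ 0) from (neg_sub _ _).symm, inner_neg_left,
      real_inner_comm, hcosθ]
    field_simp
  have hsum12 : ‖e1 + e2‖ ≤ 2 * s := by
    have hsq : ‖e1 + e2‖ ^ 2 = 2 - 2 * Real.cos (θ 0) := by
      rw [norm_add_sq_real, he1n, he2n, hE]; ring
    nlinarith only [hsq, hcos2, hs_pos, norm_nonneg (e1 + e2),
      sq_nonneg (‖e1 + e2‖ - 2 * s), sq_nonneg (‖e1 + e2‖ + 2 * s)]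
  -- the small parameter
  set t : ℝ := min (min (s ^ 2 * ε / 4) (1 / 2)) (min (n2 * n1⁻¹ / 2) (n1 * n2⁻¹ / 2)) with ht_def
  have ht_pos : 0 < t := by
    refine lt_min (lt_min (by positivity) (by norm_num)) (lt_min (by positivity) (by positivity))
  have ht1 : t ≤ s ^ 2 * ε / 4 := le_trans (min_le_left _ _) (min_le_left _ _)
  have ht2 : t ≤ 1 / 2 := le_trans (min_le_left _ _) (min_le_right _ _)
  have ht3 : t ≤ n2 * n1⁻¹ / 2 := le_trans (min_le_right _ _) (min_le_left _ _)
  have ht4 : t ≤ n1 * n2⁻¹ / 2 := le_trans (min_le_right _ _) (min_le_right _ _)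
  have hi1 : (0:ℝ) < n1⁻¹ := inv_pos.mpr hn1
  have hi2 : (0:ℝ) < n2⁻¹ := inv_pos.mpr hn2
  have hii1 : n1 * n1⁻¹ = 1 := mul_inv_cancel₀ hn1.ne'
  have hii2 : n2 * n2⁻¹ = 1 := mul_inv_cancel₀ hn2.ne'
  have htn2 : t * n2⁻¹ < n1⁻¹ := by
    calc t * n2⁻¹ ≤ n2 * n1⁻¹ / 2 * n2⁻¹ := mul_le_mul_of_nonneg_right ht3 hi2.le
      _ = n1⁻¹ / 2 * (n2 * n2⁻¹) := by ring
      _ = n1⁻¹ / 2 := by rw [hii2, mul_one]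
      _ < n1⁻¹ := by linarith only [hi1]
  have htn1 : t * n1⁻¹ < n2⁻¹ := by
    calc t * n1⁻¹ ≤ n1 * n2⁻¹ / 2 * n1⁻¹ := mul_le_mul_of_nonneg_right ht4 hi1.le
      _ = n2⁻¹ / 2 * (n1 * n1⁻¹) := by ring
      _ = n2⁻¹ / 2 := by rw [hii1, mul_one]
      _ < n2⁻¹ := by linarith only [hi2]
  -- lambda
  set lam : ℝ := if n2⁻¹ ≤ n1⁻¹ then 1 - t else 1 + t with hlam_def
  have hlam_cases : (lam = 1 - t ∧ n2⁻¹ ≤ n1⁻¹) ∨ (lam = 1 + t ∧ n1⁻¹ < n2⁻¹) := by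
    rcases le_or_gt n2⁻¹ n1⁻¹ with hc | hc
    · exact Or.inl ⟨by rw [hlam_def, if_pos hc], hc⟩
    · exact Or.inr ⟨by rw [hlam_def, if_neg (not_le.mpr hc)], hc⟩
  have hlam_lb : 1 - t ≤ lam := by rcases hlam_cases with ⟨h, _⟩ | ⟨h, _⟩ <;> rw [h] <;> linarith only [ht_pos]
  have hlam_ub : lam ≤ 1 + t := by rcases hlam_cases with ⟨h, _⟩ | ⟨h, _⟩ <;> rw [h] <;> linarith only [ht_pos]
  have hlam_pos : 0 < lam := by linarith only [hlam_lb, ht2]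
  -- the three points
  set a : Pt := τ 0 with ha_def
  set dm : Pt := e1 + t • e2 with hdm_def
  set db : Pt := lam • (e2 + t • e1) with hdb_def
  set m : Pt := a + dm with hm_def
  set b : Pt := m + db with hb_def
  -- barycentric linear part
  set Lc : Fin 3 → Pt →ₗ[ℝ] ℝ := fun i => (B.coord i).linear with hLc_def
  have hdiffc : ∀ (i : Fin 3) (p q : Pt), B.coord i p - B.coord i q = Lc i (p - q) := by
    intro i p q
    have := (B.coord i).map_vadd q (p - q)
    simp only [vadd_eq_add, sub_add_cancel] at this
    rw [this, hLc_def]; simp [vadd_eq_add]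
  have hLcτ : ∀ i j k : Fin 3, Lc i (τ j - τ k) = B.coord i (τ j) - B.coord i (τ k) := by
    intro i j k
    rw [← hdiffc]
  have hLe1 : ∀ i, Lc i e1 = n1⁻¹ * (B.coord i (τ 0) - B.coord i (τ 2)) := by
    intro i; rw [he1_def, map_smul, smul_eq_mul, hLcτ]
  have hLe2 : ∀ i, Lc i e2 = n2⁻¹ * (B.coord i (τ 1) - B.coord i (τ 0)) := by
    intro i; rw [he2_def, map_smul, smul_eq_mul, hLcτ]
  have hL0e1 : Lc 0 e1 = n1⁻¹ := by
    rw [hLe1, coordτ, coordτ, if_pos rfl, if_neg (by decide)]; ring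
  have hL1e1 : Lc 1 e1 = 0 := by
    rw [hLe1, coordτ, coordτ, if_neg (by decide), if_neg (by decide)]; ring
  have hL2e1 : Lc 2 e1 = -n1⁻¹ := by
    rw [hLe1, coordτ, coordτ, if_neg (by decide), if_pos rfl]; ring
  have hL0e2 : Lc 0 e2 = -n2⁻¹ := by
    rw [hLe2, coordτ, coordτ, if_neg (by decide), if_pos rfl]; ring
  have hL1e2 : Lc 1 e2 = n2⁻¹ := by
    rw [hLe2, coordτ, coordτ, if_pos rfl, if_neg (by decide)]; ring
  have hL2e2 : Lc 2 e2 = 0 := by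
    rw [hLe2, coordτ, coordτ, if_neg (by decide), if_neg (by decide)]; ring
  -- coordinates of the three points
  have hcm : ∀ i, B.coord i m = B.coord i a + (Lc i e1 + t * Lc i e2) := by
    intro i
    have h := hdiffc i m a
    rw [show m - a = dm by rw [hm_def]; abel] at h
    rw [hdm_def] at h
    simp only [map_add, map_smul, smul_eq_mul] at h
    linarith only [h]
  have hcb : ∀ i, B.coord i b = B.coord i m + lam * (Lc i e2 + t * Lc i e1) := by
    intro i
    have h := hdiffc i b m
    rw [show b - m = db by rw [hb_def]; abel] at h
    rw [hdb_def] at h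
    simp only [map_add, map_smul, smul_eq_mul] at h
    linarith only [h]
  -- strict coordinate comparisons
  have c0am : B.coord 0 a < B.coord 0 m := by
    rw [hcm 0, hL0e1, hL0e2]; linarith only [mul_neg t n2⁻¹, htn2]
  have c1am : B.coord 1 a < B.coord 1 m := by
    rw [hcm 1, hL1e1, hL1e2]; linarith only [mul_pos ht_pos hi2]
  have c2ma : B.coord 2 m < B.coord 2 a := by
    rw [hcm 2, hL2e1, hL2e2]; linarith only [mul_zero t, hi1]
  have c0bm : B.coord 0 b < B.coord 0 m := by
    rw [hcb 0, hL0e1, hL0e2]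
    have h : -n2⁻¹ + t * n1⁻¹ < 0 := by linarith only [htn1]
    linarith only [mul_neg_of_pos_of_neg hlam_pos h]
  have c1mb : B.coord 1 m < B.coord 1 b := by
    rw [hcb 1, hL1e1, hL1e2]
    have h : (0:ℝ) < n2⁻¹ + t * 0 := by rw [mul_zero]; linarith only [hi2]
    linarith only [mul_pos hlam_pos h]
  have c2bm : B.coord 2 b < B.coord 2 m := by
    rw [hcb 2, hL2e1, hL2e2]
    have h : (0:ℝ) + t * -n1⁻¹ < 0 := by rw [mul_neg]; linarith only [mul_pos ht_pos hi1]
    linarith only [mul_neg_of_pos_of_neg hlam_pos h]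
  have c1ab : B.coord 1 a < B.coord 1 b := lt_trans c1am c1mb
  have c2ba : B.coord 2 b < B.coord 2 a := lt_trans c2bm c2ma
  have c0ab : B.coord 0 a ≠ B.coord 0 b := by
    have hb0 : B.coord 0 b =
        B.coord 0 a + ((n1⁻¹ - t * n2⁻¹) + lam * (-n2⁻¹ + t * n1⁻¹)) := by
      rw [hcb 0, hcm 0, hL0e1, hL0e2]; ring
    have htt : 0 < t * (1 - t) := mul_pos ht_pos (by linarith only [ht2])
    rcases hlam_cases with ⟨hl, hc⟩ | ⟨hl, hc⟩
    · -- lam = 1 - t, n2⁻¹ ≤ n1⁻¹ : coord 0 increases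
      intro hEq
      rw [hb0, hl] at hEq
      have h1 : 0 ≤ (n1⁻¹ - n2⁻¹) * (t * (1 - t)) :=
        mul_nonneg (by linarith only [hc]) htt.le
      have h2 : 0 < n2⁻¹ * (t * (1 - t)) := mul_pos hi2 htt
      nlinarith only [hEq, hc, h1, h2]
    · -- lam = 1 + t, n1⁻¹ < n2⁻¹ : coord 0 decreases
      intro hEq
      rw [hb0, hl] at hEq
      have h1 : 0 < (n2⁻¹ - n1⁻¹) * (1 + t + t ^ 2) :=
        mul_pos (by linarith only [hc]) (by positivity)
      have h2 : 0 < n2⁻¹ * (t * (1 - t)) := mul_pos hi2 htt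
      nlinarith only [hEq, h1, h2]
  -- distinctness of points
  have hne_am : a ≠ m := fun h => absurd (congrArg (B.coord 1) h) (ne_of_lt c1am)
  have hne_mb : m ≠ b := fun h => absurd (congrArg (B.coord 1) h) (ne_of_lt c1mb)
  have hne_ab : a ≠ b := fun h => absurd (congrArg (B.coord 1) h) (ne_of_lt c1ab)
  -- coordinatewise distinctness for GenPos
  have hne_coord_am : ∀ j : Fin 3, B.coord j a ≠ B.coord j m := by
    intro j
    fin_cases j
    · exact ne_of_lt c0am
    · exact ne_of_lt c1am
    · exact (ne_of_lt c2ma).symm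
  have hne_coord_mb : ∀ j : Fin 3, B.coord j m ≠ B.coord j b := by
    intro j
    fin_cases j
    · exact (ne_of_lt c0bm).symm
    · exact ne_of_lt c1mb
    · exact (ne_of_lt c2bm).symm
  have hne_coord_ab : ∀ j : Fin 3, B.coord j a ≠ B.coord j b := by
    intro j
    fin_cases j
    · exact c0ab
    · exact ne_of_lt c1ab
    · exact (ne_of_lt c2ba).symm
  -- the finite set
  set S : Finset Pt := {a, m, b} with hS_def
  have hmemS : ∀ {u : Pt}, u ∈ (↑S : Set Pt) → u = a ∨ u = m ∨ u = b := by
    intro u hu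
    simpa [hS_def] using hu
  have haS : a ∈ S := by simp [hS_def]
  have hmS : m ∈ S := by simp [hS_def]
  have hbS : b ∈ S := by simp [hS_def]
  have hmSet : m ∈ (↑S : Set Pt) := by simpa using hmS
  -- general position
  have hgen : GenPos τ ↑S := by
    intro u hu v hv huv i c hc
    have hside : ∀ i : Fin 3, (i + 2 ≠ i + 1 ∧ i + 2 ≠ i) := by decide
    have h0 : B.coord (i + 2) v - B.coord (i + 2) u = Lc (i + 2) (v - u) := hdiffc _ _ _
    rw [hc, map_smul, smul_eq_mul, hLcτ, coordτ, coordτ, if_neg (hside i).1,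
      if_neg (hside i).2] at h0
    have hcc : B.coord (i + 2) u = B.coord (i + 2) v := by linarith
    have hneq : ∀ j : Fin 3, B.coord j u ≠ B.coord j v := by
      intro j
      rcases hmemS hu with rfl | rfl | rfl <;> rcases hmemS hv with rfl | rfl | rfl
      · exact absurd rfl huv
      · exact hne_coord_am j
      · exact hne_coord_ab j
      · exact (hne_coord_am j).symm
      · exact absurd rfl huv
      · exact hne_coord_mb j
      · exact (hne_coord_ab j).symm
      · exact (hne_coord_mb j).symm
      · exact absurd rfl huv
    exact hneq (i + 2) hcc
  -- the blocking condition
  have hblock : ∀ i : Fin 3, min (B.coord i a) (B.coord i b) < B.coord i m := by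
    intro i
    fin_cases i
    · exact min_lt_iff.mpr (Or.inl c0am)
    · exact min_lt_iff.mpr (Or.inl c1am)
    · exact min_lt_iff.mpr (Or.inr c2bm)
  -- closedness of scaled translates
  have hclosed : ∀ (r : ℝ) (w : Pt), IsClosed (scaledTranslate (Tri τ) r w) := by
    intro r w
    have hcpt : IsCompact (Tri τ) := (Set.finite_range τ).isCompact_convexHull (𝕜 := ℝ)
    exact (hcpt.image ((continuous_const_smul r).add continuous_const)).isClosed
  -- no direct edge between a and b
  have hnoedge : ∀ u v : Pt, TDAdj (Tri τ) ↑S u v → (u = a ∧ v = b) ∨ (u = b ∧ v = a) → False := by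
    rintro u v ⟨hu, hv, huv, r, hr, w, hfu, hfv, hemp⟩ hcase
    have hu' : u ∈ scaledTranslate (Tri τ) r w := (hclosed r w).frontier_subset hfu
    have hv' : v ∈ scaledTranslate (Tri τ) r w := (hclosed r w).frontier_subset hfv
    refine hemp m hmSet ?_
    rcases hcase with ⟨rfl, rfl⟩ | ⟨rfl, rfl⟩
    · exact block_interior τ B hBτ hr w _ _ m hu' hv' hblock
    · exact block_interior τ B hBτ hr w _ _ m hu' hv'
        (fun i => by rw [min_comm]; exact hblock i)
  -- the potential function
  set φ : Pt → ℝ := fun x => if x = a then 0 else if x = m then ‖a - m‖ else ‖a - m‖ + ‖m - b‖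
    with hφ_def
  have hφa : φ a = 0 := by rw [hφ_def]; simp
  have hφm : φ m = ‖a - m‖ := by rw [hφ_def]; simp [hne_am.symm]
  have hφb : φ b = ‖a - m‖ + ‖m - b‖ := by rw [hφ_def]; simp [hne_ab.symm, hne_mb.symm]
  have hedge : ∀ u v, TDAdj (Tri τ) ↑S u v → |φ u - φ v| ≤ ‖u - v‖ := by
    intro u v hadj
    have hu := hadj.1
    have hv := hadj.2.1
    have huv := hadj.2.2.1
    rcases hmemS hu with rfl | rfl | rfl <;> rcases hmemS hv with rfl | rfl | rfl
    · exact absurd rfl huv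
    · rw [hφa, hφm, zero_sub, abs_neg, abs_of_nonneg (norm_nonneg _)]
    · exact absurd (Or.inl ⟨rfl, rfl⟩) (fun h => hnoedge _ _ hadj h)
    · rw [hφa, hφm, sub_zero, abs_of_nonneg (norm_nonneg _), norm_sub_rev]
    · exact absurd rfl huv
    · rw [hφm, hφb, show ‖a - m‖ - (‖a - m‖ + ‖m - b‖) = -‖m - b‖ by ring, abs_neg,
        abs_of_nonneg (norm_nonneg _)]
    · exact absurd (Or.inr ⟨rfl, rfl⟩) (fun h => hnoedge _ _ hadj h)
    · rw [hφb, hφm, show ‖a - m‖ + ‖m - b‖ - ‖a - m‖ = ‖m - b‖ by ring,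
        abs_of_nonneg (norm_nonneg _), norm_sub_rev]
    · exact absurd rfl huv
  -- norm estimates
  have hte2 : ‖t • e2‖ = t := by
    rw [norm_smul, Real.norm_eq_abs, abs_of_pos ht_pos, he2n, mul_one]
  have hte1 : ‖t • e1‖ = t := by
    rw [norm_smul, Real.norm_eq_abs, abs_of_pos ht_pos, he1n, mul_one]
  have hdm_lb : 1 - t ≤ ‖dm‖ := by
    have h := norm_sub_le dm (t • e2)
    rw [show dm - t • e2 = e1 by rw [hdm_def]; abel, he1n, hte2] at h
    linarith only [h]
  have hdb0_lb : 1 - t ≤ ‖e2 + t • e1‖ := by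
    have h := norm_sub_le (e2 + t • e1) (t • e1)
    rw [show e2 + t • e1 - t • e1 = e2 by abel, he2n, hte1] at h
    linarith only [h]
  have ham_norm : ‖a - m‖ = ‖dm‖ := by
    rw [show a - m = -dm by rw [hm_def]; abel, norm_neg]
  have hmb_norm : ‖m - b‖ = lam * ‖e2 + t • e1‖ := by
    rw [show m - b = -db by rw [hb_def]; abel, norm_neg, hdb_def, norm_smul,
      Real.norm_eq_abs, abs_of_pos hlam_pos]
  have hLen_lb : 2 - 3 * t ≤ ‖a - m‖ + ‖m - b‖ := by
    rw [ham_norm, hmb_norm]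
    have h1 : (1 - t) * (1 - t) ≤ lam * ‖e2 + t • e1‖ :=
      mul_le_mul hlam_lb hdb0_lb (by linarith only [ht2]) (by linarith only [hlam_lb, ht2])
    nlinarith only [hdm_lb, h1, ht_pos, ht2]
  have hab_ub : ‖a - b‖ ≤ 2 * s + 4 * t := by
    have hvec : a - b = -((e1 + e2) + ((lam * t) • e1 + (t + lam - 1) • e2)) := by
      rw [show a - b = -(dm + db) by rw [hb_def, hm_def]; abel, hdm_def, hdb_def]
      rw [neg_inj]
      module
    rw [hvec, norm_neg]
    have h1 := norm_add_le (e1 + e2) ((lam * t) • e1 + (t + lam - 1) • e2)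
    have h2 := norm_add_le ((lam * t) • e1) ((t + lam - 1) • e2)
    simp only [norm_smul, Real.norm_eq_abs, he1n, he2n, mul_one] at h2
    have h3 : |lam * t| ≤ 3 / 2 * t := by
      rw [abs_of_pos (mul_pos hlam_pos ht_pos)]
      have := mul_le_mul_of_nonneg_right
        (show lam ≤ 3 / 2 by linarith only [hlam_ub, ht2]) ht_pos.le
      linarith only [this]
    have h4 : |t + lam - 1| ≤ 2 * t := by
      rcases hlam_cases with ⟨hl, _⟩ | ⟨hl, _⟩ <;> rw [hl]
      · rw [show t + (1 - t) - 1 = 0 by ring, abs_zero]; linarith only [ht_pos]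
      · rw [show t + (1 + t) - 1 = 2 * t by ring, abs_of_pos (by linarith only [ht_pos])]
    linarith only [h1, h2, h3, h4, hsum12, ht_pos]
  -- conclusion
  refine ⟨S, hgen, a, haS, b, hbS, hne_ab, ?_⟩
  rintro P ⟨hPne, hPhead, hPlast, hPchain⟩
  obtain ⟨x, P', rfl⟩ := List.exists_cons_of_ne_nil hPne
  have hx : x = a := by simpa using hPhead
  subst hx
  have hlb := pathLength_lb (TDAdj (Tri τ) ↑S) φ hedge P' a b hPchain hPlast
  rw [hφa, hφb, zero_sub, abs_neg,
    abs_of_nonneg (add_nonneg (norm_nonneg _) (norm_nonneg _))] at hlb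
  have hLen2 : 2 - 3 * t ≤ pathLength (a :: P') := le_trans hLen_lb hlb
  rcases le_or_gt (1 / s - ε) 0 with hcase | hcase
  · have : (1 / s - ε) * ‖a - b‖ ≤ 0 :=
      mul_nonpos_iff.mpr (Or.inr ⟨hcase, norm_nonneg _⟩)
    linarith only [this, hLen2, ht2]
  · have hstep : (1 / s - ε) * ‖a - b‖ ≤ (1 / s - ε) * (2 * s + 4 * t) :=
      mul_le_mul_of_nonneg_left hab_ub hcase.le
    have hfin : (1 / s - ε) * (2 * s + 4 * t) ≤ 2 - 3 * t := by
      have hinv : 1 / s * s = 1 := by field_simp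
      have hts : 4 * t * (1 / s) ≤ s * ε := by
        rw [div_eq_inv_mul, mul_one]
        have h4t : 4 * t ≤ s ^ 2 * ε := by linarith only [ht1]
        calc 4 * t * s⁻¹ ≤ s ^ 2 * ε * s⁻¹ := by
              apply mul_le_mul_of_nonneg_right h4t (by positivity)
          _ = s * ε * (s * s⁻¹) := by ring
          _ = s * ε := by rw [mul_inv_cancel₀ hs_pos.ne']; ring
      have hse : s ^ 2 * ε ≤ s * ε := by
        nlinarith only [mul_nonneg (mul_nonneg (sub_nonneg.mpr hs_le) hs_pos.le) hε.le]
      have h3t : 3 * t ≤ s * ε := by linarith only [ht1, hse, mul_nonneg hs_pos.le hε.le]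
      have hexp : (1 / s - ε) * (2 * s + 4 * t) =
          2 * (1 / s * s) + 4 * t * (1 / s) - 2 * (s * ε) - 4 * (t * ε) := by ring
      rw [hexp, hinv]
      linarith only [hts, h3t, mul_pos ht_pos hε]
    linarith only [hstep, hfin, hLen2]
end
end

section
/- For each j ∈ {1,2,3} and each point p on the closed segment from τ_{j+1} to τ_{j−1} with p ≠ τ_j, the following holds: min( ‖p − τ_{j+1}‖ + ‖τ_{j+1} − τ_{j−1}‖ + ‖τ_{j−1} − τ_j‖ , ‖p − τ_{j−1}‖ + ‖τ_{j−1} − τ_{j+1}‖ + ‖τ_{j+1} − τ_j‖ ) ≤ C(θ₁,θ₂)·‖p − τ_j‖. -/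
noncomputable section

set_option maxHeartbeats 1600000

open scoped RealInnerProductSpace

private lemma Qdet (x y : Pt) (a b c d : ℝ) :
    ⟪a•x+b•y, a•x+b•y⟫ * ⟪c•x+d•y, c•x+d•y⟫ - ⟪a•x+b•y, c•x+d•y⟫ * ⟪a•x+b•y, c•x+d•y⟫
    = (a*d-b*c)^2 * (⟪x,x⟫*⟪y,y⟫ - ⟪x,y⟫*⟪x,y⟫) := by
  simp only [inner_add_left, inner_add_right, real_inner_smul_left, real_inner_smul_right,
    real_inner_comm y x]
  ring

private lemma sinmul (p1 p2 p3 : Pt) :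
    Real.sin (EuclideanGeometry.angle p1 p2 p3) * (‖p1 - p2‖ * ‖p3 - p2‖) =
      Real.sqrt (⟪p1-p2, p1-p2⟫ * ⟪p3-p2, p3-p2⟫ - ⟪p1-p2, p3-p2⟫ * ⟪p1-p2, p3-p2⟫) := by
  rw [EuclideanGeometry.angle]
  simpa [vsub_eq_sub] using InnerProductGeometry.sin_angle_mul_norm_mul_norm (p1-p2) (p3-p2)

private lemma cosmul (p1 p2 p3 : Pt) :
    Real.cos (EuclideanGeometry.angle p1 p2 p3) * (‖p1 - p2‖ * ‖p3 - p2‖) =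
      ⟪p1-p2, p3-p2⟫ := by
  rw [EuclideanGeometry.angle]
  simpa [vsub_eq_sub] using InnerProductGeometry.cos_angle_mul_norm_mul_norm (p1-p2) (p3-p2)

/-- For `p` on the segment from `τ_{j+1}` to `τ_{j−1}` with `p ≠ τ_j`,
the shorter of the two detours around the triangle is at most `C(θ₁,θ₂)·‖p − τ_j‖`. -/
theorem detour_le_C_mul_dist
    (θ : Fin 3 → ℝ) (hθ0 : 0 < θ 0) (hθ01 : θ 0 ≤ θ 1) (hθ12 : θ 1 ≤ θ 2)
    (hsum : θ 0 + θ 1 + θ 2 = Real.pi)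
    (τ : Fin 3 → Pt) (hncol : ¬ Collinear ℝ (Set.range τ))
    (hangle : ∀ j : Fin 3, EuclideanGeometry.angle (τ (j + 1)) (τ j) (τ (j - 1)) = θ j)
    (j : Fin 3) (p : Pt) (hp : p ∈ segment ℝ (τ (j + 1)) (τ (j - 1))) (hpj : p ≠ τ j) :
    min (‖p - τ (j + 1)‖ + ‖τ (j + 1) - τ (j - 1)‖ + ‖τ (j - 1) - τ j‖)
        (‖p - τ (j - 1)‖ + ‖τ (j - 1) - τ (j + 1)‖ + ‖τ (j + 1) - τ j‖)
      ≤ Cval θ * ‖p - τ j‖ := by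
  -- index arithmetic in Fin 3
  have hj1 : j + 1 + 1 = j - 1 := by
    have : ∀ k : Fin 3, k + 1 + 1 = k - 1 := by decide
    exact this j
  have hj3 : j - 1 + 1 = j := by
    have : ∀ k : Fin 3, k - 1 + 1 = k := by decide
    exact this j
  have hj4 : j - 1 - 1 = j + 1 := by
    have : ∀ k : Fin 3, k - 1 - 1 = k + 1 := by decide
    exact this j
  have hj2 : j + 1 - 1 = j := by
    have : ∀ k : Fin 3, k + 1 - 1 = k := by decide
    exact this j
  have hcover : ∀ l : Fin 3, l = j ∨ l = j + 1 ∨ l = j - 1 := by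
    have : ∀ k l : Fin 3, l = k ∨ l = k + 1 ∨ l = k - 1 := by decide
    exact this j
  -- angles are in (0, π), sines positive
  have hθpos : ∀ i : Fin 3, 0 < θ i ∧ θ i < Real.pi := by
    have h1 : 0 < θ 1 := lt_of_lt_of_le hθ0 hθ01
    have h2 : 0 < θ 2 := lt_of_lt_of_le h1 hθ12
    intro i
    have hi : i = 0 ∨ i = 1 ∨ i = 2 := by
      have : ∀ k : Fin 3, k = 0 ∨ k = 1 ∨ k = 2 := by decide
      exact this i
    rcases hi with rfl | rfl | rfl <;> exact ⟨by linarith, by linarith⟩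
  have hsin : ∀ i : Fin 3, 0 < Real.sin (θ i) :=
    fun i => Real.sin_pos_of_pos_of_lt_pi (hθpos i).1 (hθpos i).2
  -- distinct vertices
  have hAB : τ (j+1) ≠ τ j := by
    intro he; apply hncol
    refine Collinear.subset ?_ (collinear_pair ℝ (τ j) (τ (j-1)))
    rintro x ⟨l, rfl⟩
    rcases hcover l with h | h | h <;> rw [h] <;> simp [he]
  have hAC : τ (j-1) ≠ τ j := by
    intro he; apply hncol
    refine Collinear.subset ?_ (collinear_pair ℝ (τ j) (τ (j+1)))
    rintro x ⟨l, rfl⟩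
    rcases hcover l with h | h | h <;> rw [h] <;> simp [he]
  have hBC : τ (j+1) ≠ τ (j-1) := by
    intro he; apply hncol
    refine Collinear.subset ?_ (collinear_pair ℝ (τ j) (τ (j-1)))
    rintro x ⟨l, rfl⟩
    rcases hcover l with h | h | h <;> rw [h] <;> simp [he]
  -- segment decomposition
  obtain ⟨s, t, hs, ht, hst, hpdef⟩ := hp
  have hs1 : s = 1 - t := by linarith
  subst hs1
  have ht1 : t ≤ 1 := by linarith
  -- vectors
  set u : Pt := τ (j+1) - τ j with hu
  set v : Pt := τ (j-1) - τ j with hv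
  set w : Pt := p - τ j with hwdef
  have hw : w = (1-t) • u + t • v := by rw [hwdef, hu, hv, ← hpdef]; module
  -- positivity of lengths
  have hcpos : (0:ℝ) < ‖u‖ := by
    rw [norm_pos_iff]; rw [hu]; exact sub_ne_zero.mpr hAB
  have hbpos : (0:ℝ) < ‖v‖ := by
    rw [norm_pos_iff]; rw [hv]; exact sub_ne_zero.mpr hAC
  have hapos : (0:ℝ) < ‖v - u‖ := by
    rw [norm_pos_iff]
    rw [hu, hv, show τ (j-1) - τ j - (τ (j+1) - τ j) = τ (j-1) - τ (j+1) by abel]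
    exact sub_ne_zero.mpr (Ne.symm hBC)
  have hdpos : (0:ℝ) < ‖w‖ := by
    rw [norm_pos_iff]; rw [hwdef]; exact sub_ne_zero.mpr hpj
  have hbne : ‖v‖ ≠ 0 := ne_of_gt hbpos
  have hbbne : ‖v‖ * ‖v‖ ≠ 0 := mul_ne_zero hbne hbne
  -- the angle α
  set α : ℝ := InnerProductGeometry.angle w v with hαdef
  have hα0 : 0 ≤ α := InnerProductGeometry.angle_nonneg w v
  have hαpi : α ≤ Real.pi := InnerProductGeometry.angle_le_pi w v
  -- law-of-sines style facts
  have hA : Real.sin (θ j) * (‖u‖ * ‖v‖) = Real.sqrt (⟪u,u⟫*⟪v,v⟫ - ⟪u,v⟫*⟪u,v⟫) := by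
    have h := sinmul (τ (j+1)) (τ j) (τ (j-1))
    rw [hangle j] at h
    rw [← hu, ← hv] at h
    exact h
  have hcosA : Real.cos (θ j) * (‖u‖ * ‖v‖) = ⟪u,v⟫ := by
    have h := cosmul (τ (j+1)) (τ j) (τ (j-1))
    rw [hangle j] at h
    rw [← hu, ← hv] at h
    exact h
  have hB : Real.sin (θ (j+1)) * (‖v - u‖ * ‖u‖) =
      Real.sqrt (⟪u,u⟫*⟪v,v⟫ - ⟪u,v⟫*⟪u,v⟫) := by
    have hB' := hangle (j+1)
    rw [hj1, hj2] at hB'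
    have h := sinmul (τ (j-1)) (τ (j+1)) (τ j)
    rw [hB'] at h
    have r1 : τ (j-1) - τ (j+1) = v - u := by rw [hu, hv]; abel
    have r2 : τ j - τ (j+1) = -u := by rw [hu]; abel
    rw [r1, r2] at h
    have hQ : ⟪v-u, v-u⟫*⟪-u,-u⟫ - ⟪v-u,-u⟫*⟪v-u,-u⟫ = ⟪u,u⟫*⟪v,v⟫ - ⟪u,v⟫*⟪u,v⟫ := by
      have r3 : v - u = (-1:ℝ)•u + (1:ℝ)•v := by module
      have r4 : (-u : Pt) = (-1:ℝ)•u + (0:ℝ)•v := by module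
      rw [r3, r4, Qdet]; norm_num
    rw [hQ, norm_neg] at h
    exact h
  have hC : Real.sin (θ (j-1)) * (‖v‖ * ‖v - u‖) =
      Real.sqrt (⟪u,u⟫*⟪v,v⟫ - ⟪u,v⟫*⟪u,v⟫) := by
    have hC' := hangle (j-1)
    rw [hj3, hj4] at hC'
    have h := sinmul (τ j) (τ (j-1)) (τ (j+1))
    rw [hC'] at h
    have r1 : τ j - τ (j-1) = -v := by rw [hv]; abel
    have r2 : τ (j+1) - τ (j-1) = u - v := by rw [hu, hv]; abel
    rw [r1, r2] at h
    have hQ : ⟪-v, -v⟫*⟪u-v, u-v⟫ - ⟪-v, u-v⟫*⟪-v, u-v⟫ = ⟪u,u⟫*⟪v,v⟫ - ⟪u,v⟫*⟪u,v⟫ := by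
      have r3 : (-v : Pt) = (0:ℝ)•u + (-1:ℝ)•v := by module
      have r4 : u - v = (1:ℝ)•u + (-1:ℝ)•v := by module
      rw [r3, r4, Qdet]; norm_num
    rw [hQ, norm_neg, norm_sub_rev u v] at h
    exact h
  have hcosγ : Real.cos (θ (j-1)) * (‖v‖ * ‖v - u‖) = ⟪-v, u-v⟫ := by
    have hC' := hangle (j-1)
    rw [hj3, hj4] at hC'
    have h := cosmul (τ j) (τ (j-1)) (τ (j+1))
    rw [hC'] at h
    have r1 : τ j - τ (j-1) = -v := by rw [hv]; abel
    have r2 : τ (j+1) - τ (j-1) = u - v := by rw [hu, hv]; abel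
    rw [r1, r2, norm_neg, norm_sub_rev u v] at h
    exact h
  have hVv : ⟪-v, u-v⟫ = ‖v‖*‖v‖ - ⟪u,v⟫ := by
    rw [inner_neg_left, inner_sub_right, real_inner_self_eq_norm_mul_norm,
      real_inner_comm v u]
    ring
  have hα : Real.sin α * (‖w‖ * ‖v‖) =
      (1-t) * Real.sqrt (⟪u,u⟫*⟪v,v⟫ - ⟪u,v⟫*⟪u,v⟫) := by
    have h := InnerProductGeometry.sin_angle_mul_norm_mul_norm w v
    have h2 := Qdet u v (1-t) t 0 1
    simp only [zero_smul, one_smul, zero_add] at h2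
    rw [← hw] at h2
    rw [h2, show ((1-t)*1 - t*0)^2 = (1-t)^2 by ring,
      Real.sqrt_mul (sq_nonneg _), Real.sqrt_sq (by linarith : (0:ℝ) ≤ 1 - t)] at h
    exact h
  have hcosα : Real.cos α * (‖w‖ * ‖v‖) = ⟪w,v⟫ :=
    InnerProductGeometry.cos_angle_mul_norm_mul_norm w v
  have hwv : ⟪w,v⟫ = (1-t)*⟪u,v⟫ + t*(‖v‖*‖v‖) := by
    rw [hw, inner_add_left, real_inner_smul_left, real_inner_smul_left,
      real_inner_self_eq_norm_mul_norm]
  -- key identities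
  have E1 : Real.sin (θ j - α) * (‖w‖ * ‖u‖) =
      t * Real.sqrt (⟪u,u⟫*⟪v,v⟫ - ⟪u,v⟫*⟪u,v⟫) := by
    rw [Real.sin_sub]
    apply mul_right_cancel₀ hbbne
    linear_combination (Real.cos α * ‖w‖ * ‖v‖) * hA
      + Real.sqrt (⟪u,u⟫*⟪v,v⟫ - ⟪u,v⟫*⟪u,v⟫) * hcosα
      - (Real.sin α * ‖w‖ * ‖v‖) * hcosA - ⟪u,v⟫ * hα
      + Real.sqrt (⟪u,u⟫*⟪v,v⟫ - ⟪u,v⟫*⟪u,v⟫) * hwv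
  have E2 : Real.sin (α + θ (j-1)) * (‖w‖ * ‖v - u‖) =
      Real.sqrt (⟪u,u⟫*⟪v,v⟫ - ⟪u,v⟫*⟪u,v⟫) := by
    rw [Real.sin_add]
    apply mul_right_cancel₀ hbbne
    linear_combination (Real.cos (θ (j-1)) * ‖v - u‖ * ‖v‖) * hα
      + ((1-t) * Real.sqrt (⟪u,u⟫*⟪v,v⟫ - ⟪u,v⟫*⟪u,v⟫)) * hcosγ
      + ((1-t) * Real.sqrt (⟪u,u⟫*⟪v,v⟫ - ⟪u,v⟫*⟪u,v⟫)) * hVv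
      + (Real.sin (θ (j-1)) * ‖v - u‖ * ‖v‖) * hcosα
      + ⟪w,v⟫ * hC
      + Real.sqrt (⟪u,u⟫*⟪v,v⟫ - ⟪u,v⟫*⟪u,v⟫) * hwv
  -- α ≤ θ j
  have hsge : 0 ≤ Real.sin (θ j - α) := by
    have hQnn : 0 ≤ Real.sqrt (⟪u,u⟫*⟪v,v⟫ - ⟪u,v⟫*⟪u,v⟫) := Real.sqrt_nonneg _
    have hprod : (0:ℝ) < ‖w‖ * ‖u‖ := mul_pos hdpos hcpos
    nlinarith [E1]
  have hαle : α ≤ θ j := by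
    by_contra hcon
    push_neg at hcon
    have h1 : θ j - α < 0 := by linarith
    have h2 : -Real.pi < θ j - α := by
      have := (hθpos j).1; linarith
    have := Real.sin_neg_of_neg_of_neg_pi_lt h1 h2
    linarith
  -- the four ratio computations
  have e₁ : Real.sin (θ j - α) / Real.sin (θ (j+1)) = (t * ‖v - u‖) / ‖w‖ := by
    rw [div_eq_div_iff (ne_of_gt (hsin (j+1))) (ne_of_gt hdpos)]
    apply mul_right_cancel₀ (ne_of_gt hcpos)
    linear_combination E1 - t * hB
  have e₂ : Real.sin α / Real.sin (θ (j-1)) = ((1-t) * ‖v - u‖) / ‖w‖ := by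
    rw [div_eq_div_iff (ne_of_gt (hsin (j-1))) (ne_of_gt hdpos)]
    apply mul_right_cancel₀ hbne
    linear_combination hα - (1-t) * hC
  have e₃ : Real.sin (α + θ (j-1)) / Real.sin (θ (j+1)) = ‖u‖ / ‖w‖ := by
    rw [div_eq_div_iff (ne_of_gt (hsin (j+1))) (ne_of_gt hdpos)]
    apply mul_right_cancel₀ (ne_of_gt hapos)
    linear_combination E2 - hB
  have e₄ : Real.sin (α + θ (j-1)) / Real.sin (θ (j-1)) = ‖v‖ / ‖w‖ := by
    rw [div_eq_div_iff (ne_of_gt (hsin (j-1))) (ne_of_gt hdpos)]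
    apply mul_right_cancel₀ (ne_of_gt hapos)
    linear_combination E2 - hC
  -- value of Cexpr
  have hCe : Cexpr θ j α * ‖w‖ =
      t * ‖v - u‖ + (1-t) * ‖v - u‖ +
        min ((1-t) * ‖v - u‖ + ‖u‖) (t * ‖v - u‖ + ‖v‖) := by
    rw [Cexpr, e₁, e₂, e₃, e₄, ← add_div, ← add_div, ← add_div,
      min_div_div_right (le_of_lt hdpos), ← add_div,
      div_mul_cancel₀ _ (ne_of_gt hdpos)]
  -- norms of the goal
  have g1 : ‖p - τ (j+1)‖ = t * ‖v - u‖ := by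
    have : p - τ (j+1) = t • (v - u) := by rw [hu, hv, ← hpdef]; module
    rw [this, norm_smul, Real.norm_of_nonneg ht]
  have g2 : ‖p - τ (j-1)‖ = (1-t) * ‖v - u‖ := by
    have : p - τ (j-1) = (1-t) • (u - v) := by rw [hu, hv, ← hpdef]; module
    rw [this, norm_smul, Real.norm_of_nonneg (by linarith : (0:ℝ) ≤ 1-t), norm_sub_rev]
  have g3 : ‖τ (j+1) - τ (j-1)‖ = ‖v - u‖ := by
    have : τ (j+1) - τ (j-1) = -(v - u) := by rw [hu, hv]; module
    rw [this, norm_neg]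
  have g4 : ‖τ (j-1) - τ (j+1)‖ = ‖v - u‖ := by
    have : τ (j-1) - τ (j+1) = v - u := by rw [hu, hv]; module
    rw [this]
  -- boundedness and membership for Cval
  have hbdd : BddAbove { x : ℝ | ∃ j : Fin 3, ∃ α : ℝ, α ∈ Set.Icc 0 (θ j) ∧ x = Cexpr θ j α } := by
    have hcont : ∀ j : Fin 3, Continuous (fun α => Cexpr θ j α) := by
      intro j; unfold Cexpr; fun_prop
    choose M hM using fun j : Fin 3 => (isCompact_Icc.image (hcont j)).bddAbove
    refine ⟨max (max (M 0) (M 1)) (M 2), ?_⟩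
    rintro x ⟨j', α', hα', rfl⟩
    have hx : Cexpr θ j' α' ≤ M j' := hM j' ⟨α', hα', rfl⟩
    fin_cases j'
    · exact hx.trans (le_max_of_le_left (le_max_left _ _))
    · exact hx.trans (le_max_of_le_left (le_max_right _ _))
    · exact hx.trans (le_max_right _ _)
  have hle : Cexpr θ j α ≤ Cval θ := le_csSup hbdd ⟨j, α, ⟨hα0, hαle⟩, rfl⟩
  -- conclude
  rw [g1, g2, g3, g4]
  calc min (t * ‖v - u‖ + ‖v - u‖ + ‖v‖) ((1-t) * ‖v - u‖ + ‖v - u‖ + ‖u‖)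
      = t * ‖v - u‖ + (1-t) * ‖v - u‖ +
          min ((1-t) * ‖v - u‖ + ‖u‖) (t * ‖v - u‖ + ‖v‖) := by
        rcases le_total ((1-t) * ‖v - u‖ + ‖u‖) (t * ‖v - u‖ + ‖v‖) with h | h
        · rw [min_eq_left h, min_eq_right (by linarith)]; ring
        · rw [min_eq_right h, min_eq_left (by linarith)]; ring
    _ = Cexpr θ j α * ‖w‖ := hCe.symm
    _ ≤ Cval θ * ‖w‖ := mul_le_mul_of_nonneg_right hle (norm_nonneg _)
end
end

section
/- The supremum, over j ∈ {1,2,3} and points p on the closed segment from τ_{j+1} to τ_{j−1} with p ≠ τ_j, of the ratio min( ‖p − τ_{j+1}‖ + ‖τ_{j+1} − τ_{j−1}‖ + ‖τ_{j−1} − τ_j‖ , ‖p − τ_{j−1}‖ + ‖τ_{j−1} − τ_{j+1}‖ + ‖τ_{j+1} − τ_j‖ ) / ‖p − τ_j‖ is exactly equal to C(θ₁,θ₂). -/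
noncomputable section

open RealInnerProductSpace

private lemma trig1' (a A C : ℝ) :
    Real.sin (a + C) * Real.sin A
      = Real.sin (A - a) * Real.sin C + Real.sin a * Real.sin (A + C) := by
  rw [Real.sin_add, Real.sin_sub, Real.sin_add]; ring

private lemma trig2' (X Y : ℝ) :
    Real.sin X ^ 2 + Real.sin Y ^ 2 + 2 * Real.sin X * Real.sin Y * Real.cos (X + Y)
      = Real.sin (X + Y) ^ 2 := by
  rw [Real.sin_add, Real.cos_add]
  nlinarith [Real.sin_sq_add_cos_sq X, Real.sin_sq_add_cos_sq Y]


set_option maxHeartbeats 1600000 in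
private lemma segMinFormula (a b c d t α : ℝ) (A B C : Pt)
    (ha : 0 < a) (hb : 0 < b) (hc : 0 < c) (hsum : a + b + c = Real.pi)
    (hα : α ∈ Set.Icc 0 a) (hd : 0 < d)
    (hBC : ‖B - C‖ = Real.sin a * d)
    (hBA : ‖B - A‖ = Real.sin c * d)
    (hCA : ‖C - A‖ = Real.sin b * d)
    (hip : ⟪B - A, C - B⟫ = -(Real.cos b * ((Real.sin a * d) * (Real.sin c * d))))
    (ht : t = Real.sin (a - α) * Real.sin c / (Real.sin (α + c) * Real.sin a)) :
    (0 ≤ t ∧ t ≤ 1) ∧ B + t • (C - B) ≠ A ∧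
      min (‖B + t • (C - B) - B‖ + ‖B - C‖ + ‖C - A‖)
          (‖B + t • (C - B) - C‖ + ‖C - B‖ + ‖B - A‖) / ‖B + t • (C - B) - A‖
        = Real.sin (a - α) / Real.sin b + Real.sin α / Real.sin c +
            min (Real.sin α / Real.sin c + Real.sin (α + c) / Real.sin b)
                (Real.sin (a - α) / Real.sin b + Real.sin (α + c) / Real.sin c) := by
  obtain ⟨hα0, hα1⟩ := hα
  have hsj : 0 < Real.sin a := Real.sin_pos_of_pos_of_lt_pi ha (by linarith)
  have hs1 : 0 < Real.sin b := Real.sin_pos_of_pos_of_lt_pi hb (by linarith)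
  have hs2 : 0 < Real.sin c := Real.sin_pos_of_pos_of_lt_pi hc (by linarith)
  have hSv : 0 < Real.sin (α + c) :=
    Real.sin_pos_of_pos_of_lt_pi (by linarith) (by linarith)
  have hTv : 0 ≤ Real.sin (a - α) :=
    Real.sin_nonneg_of_nonneg_of_le_pi (by linarith) (by linarith)
  have hsa : 0 ≤ Real.sin α :=
    Real.sin_nonneg_of_nonneg_of_le_pi hα0 (by linarith)
  have I1 : Real.sin (α + c) * Real.sin a
      = Real.sin (a - α) * Real.sin c + Real.sin α * Real.sin b := by
    have h := trig1' α a c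
    rw [show a + c = Real.pi - b by linarith, Real.sin_pi_sub] at h
    exact h
  have I2 : Real.sin (α + c) ^ 2 + Real.sin (a - α) ^ 2
      - 2 * Real.sin (α + c) * Real.sin (a - α) * Real.cos b = Real.sin b ^ 2 := by
    have h := trig2' (α + c) (a - α)
    rw [show α + c + (a - α) = Real.pi - b by linarith,
      Real.cos_pi_sub, Real.sin_pi_sub] at h
    linarith [h]
  have ht0 : 0 ≤ t := by
    rw [ht]
    exact div_nonneg (mul_nonneg hTv hs2.le) (mul_pos hSv hsj).le
  have ht1 : t ≤ 1 := by
    rw [ht, div_le_one (mul_pos hSv hsj)]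
    nlinarith [mul_nonneg hsa hs1.le]
  have hq1 : ‖B + t • (C - B) - B‖
      = Real.sin (a - α) * Real.sin c * d / Real.sin (α + c) := by
    rw [add_sub_cancel_left, norm_smul, Real.norm_eq_abs, abs_of_nonneg ht0,
      norm_sub_rev, hBC, ht]
    field_simp [hSv.ne', hsj.ne']
  have hq2 : ‖B + t • (C - B) - C‖
      = Real.sin α * Real.sin b * d / Real.sin (α + c) := by
    have e2 : B + t • (C - B) - C = (1 - t) • (B - C) := by module
    rw [e2, norm_smul, Real.norm_eq_abs, abs_of_nonneg (by linarith : (0:ℝ) ≤ 1 - t),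
      hBC, ht]
    field_simp [hSv.ne', hsj.ne']
    linear_combination I1
  have hDpos : 0 < Real.sin c * Real.sin b * d / Real.sin (α + c) :=
    div_pos (mul_pos (mul_pos hs2 hs1) hd) hSv
  have hsq : ‖B + t • (C - B) - A‖ ^ 2
      = (Real.sin c * Real.sin b * d / Real.sin (α + c)) ^ 2 := by
    have e3 : B + t • (C - B) - A = (B - A) + t • (C - B) := by module
    rw [e3, norm_add_sq_real, real_inner_smul_right, hip, norm_smul, Real.norm_eq_abs,
      abs_of_nonneg ht0, hBA, norm_sub_rev C B, hBC, ht]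
    field_simp [hSv.ne', hsj.ne']
    linear_combination I2
  have hq3 : ‖B + t • (C - B) - A‖
      = Real.sin c * Real.sin b * d / Real.sin (α + c) := by
    calc ‖B + t • (C - B) - A‖
        = Real.sqrt (‖B + t • (C - B) - A‖ ^ 2) := (Real.sqrt_sq (norm_nonneg _)).symm
      _ = _ := by rw [hsq, Real.sqrt_sq hDpos.le]
  have hne : B + t • (C - B) ≠ A := by
    intro h0
    rw [show B + t • (C - B) - A = 0 by rw [h0]; abel, norm_zero] at hq3
    exact absurd hq3.symm (ne_of_gt hDpos)
  refine ⟨⟨ht0, ht1⟩, hne, ?_⟩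
  rw [hq1, hq2, hq3, hBC, hCA, norm_sub_rev C B, hBC, hBA]
  have hDne : (Real.sin c * Real.sin b * d / Real.sin (α + c)) ≠ 0 := hDpos.ne'
  have h1 : (Real.sin (a - α) * Real.sin c * d / Real.sin (α + c) +
        Real.sin a * d + Real.sin b * d) /
      (Real.sin c * Real.sin b * d / Real.sin (α + c))
      = Real.sin (a - α) / Real.sin b + Real.sin α / Real.sin c +
        (Real.sin (a - α) / Real.sin b + Real.sin (α + c) / Real.sin c) := by
    rw [div_eq_iff hDne]
    field_simp [hSv.ne', hs1.ne', hs2.ne']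
    linear_combination I1
  have h2 : (Real.sin α * Real.sin b * d / Real.sin (α + c) +
        Real.sin a * d + Real.sin c * d) /
      (Real.sin c * Real.sin b * d / Real.sin (α + c))
      = Real.sin (a - α) / Real.sin b + Real.sin α / Real.sin c +
        (Real.sin α / Real.sin c + Real.sin (α + c) / Real.sin b) := by
    rw [div_eq_iff hDne]
    field_simp [hSv.ne', hs1.ne', hs2.ne']
    linear_combination I1
  rw [← min_div_div_right hDpos.le, h1, h2, min_comm, min_add_add_left]

set_option maxHeartbeats 1600000 in
private lemma tSurj (a c : ℝ) (ha : 0 < a) (hc : 0 < c) (hac : a + c < Real.pi) :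
    ∀ t ∈ Set.Icc (0:ℝ) 1, ∃ α ∈ Set.Icc 0 a,
      Real.sin (a - α) * Real.sin c / (Real.sin (α + c) * Real.sin a) = t := by
  have hsa : 0 < Real.sin a := Real.sin_pos_of_pos_of_lt_pi ha (by linarith)
  have hsc : 0 < Real.sin c := Real.sin_pos_of_pos_of_lt_pi hc (by linarith)
  have hS : ∀ x ∈ Set.Icc 0 a, 0 < Real.sin (x + c) := fun x hx =>
    Real.sin_pos_of_pos_of_lt_pi (by linarith [hx.1]) (by linarith [hx.2])
  intro t ht
  set f : ℝ → ℝ := fun x => Real.sin (a - x) * Real.sin c /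
      (Real.sin (x + c) * Real.sin a) with hf
  have hcont : ContinuousOn f (Set.Icc 0 a) := by
    apply ContinuousOn.div
    · exact ((Real.continuous_sin.comp (continuous_const.sub continuous_id)).mul
        continuous_const).continuousOn
    · exact ((Real.continuous_sin.comp (continuous_id.add continuous_const)).mul
        continuous_const).continuousOn
    · intro x hx
      exact (mul_pos (hS x hx) hsa).ne'
  have hfb : f a = 0 := by simp [hf]
  have hfa : f 0 = 1 := by
    rw [hf]
    simp only [sub_zero, zero_add]
    rw [mul_comm]
    exact div_self (mul_pos hsc hsa).ne'
  have hiv := intermediate_value_Icc' ha.le hcont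
  rw [hfb, hfa] at hiv
  obtain ⟨α, hα, hfα⟩ := hiv ht
  exact ⟨α, hα, hfα⟩


set_option maxHeartbeats 1600000 in
/-- The supremum over `j ∈ {1,2,3}` and `p` on the segment from `τ_{j+1}` to
`τ_{j−1}`, `p ≠ τ_j`, of the detour-to-distance ratio equals `C(θ₁,θ₂)`. -/
theorem detour_ratio_sup_eq_C
    (θ : Fin 3 → ℝ) (hθ0 : 0 < θ 0) (hθ01 : θ 0 ≤ θ 1) (hθ12 : θ 1 ≤ θ 2)
    (hsum : θ 0 + θ 1 + θ 2 = Real.pi)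
    (τ : Fin 3 → Pt) (hncol : ¬ Collinear ℝ (Set.range τ))
    (hangle : ∀ j : Fin 3, EuclideanGeometry.angle (τ (j + 1)) (τ j) (τ (j - 1)) = θ j) :
    sSup { x : ℝ | ∃ j : Fin 3, ∃ p ∈ segment ℝ (τ (j + 1)) (τ (j - 1)), p ≠ τ j ∧
        x = min (‖p - τ (j + 1)‖ + ‖τ (j + 1) - τ (j - 1)‖ + ‖τ (j - 1) - τ j‖)
                (‖p - τ (j - 1)‖ + ‖τ (j - 1) - τ (j + 1)‖ + ‖τ (j + 1) - τ j‖)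
              / ‖p - τ j‖ }
      = Cval θ := by
  classical
  have jc : ∀ j : Fin 3, j = 0 ∧ j + 1 = 1 ∧ j + 2 = 2 ∨ j = 1 ∧ j + 1 = 2 ∧ j + 2 = 0 ∨
      j = 2 ∧ j + 1 = 0 ∧ j + 2 = 1 := by decide
  have i1 : ∀ j : Fin 3, j + 1 + 1 = j + 2 := by decide
  have i2 : ∀ j : Fin 3, j + 1 + 2 = j := by decide
  have i3 : ∀ j : Fin 3, j + 2 + 1 = j := by decide
  have i4 : ∀ j : Fin 3, j + 2 + 2 = j + 1 := by decide
  have i5 : ∀ j : Fin 3, j - 1 = j + 2 := by decide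
  simp only [i5] at hangle ⊢
  -- angle facts
  have hp1 : 0 < θ 1 := lt_of_lt_of_le hθ0 hθ01
  have hp2 : 0 < θ 2 := lt_of_lt_of_le hp1 hθ12
  have hpi := Real.pi_pos
  have hpos : ∀ i : Fin 3, 0 < θ i ∧ θ i < Real.pi := by
    intro i
    rcases jc i with ⟨h, -, -⟩ | ⟨h, -, -⟩ | ⟨h, -, -⟩ <;> subst h <;>
      exact ⟨by linarith, by linarith⟩
  have hsin : ∀ i : Fin 3, 0 < Real.sin (θ i) := fun i =>
    Real.sin_pos_of_pos_of_lt_pi (hpos i).1 (hpos i).2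
  have hsum3 : ∀ j : Fin 3, θ j + θ (j + 1) + θ (j + 2) = Real.pi := by
    intro j
    rcases jc j with ⟨h0, h1, h2⟩ | ⟨h0, h1, h2⟩ | ⟨h0, h1, h2⟩ <;> rw [h1, h2, h0] <;> linarith
  -- injectivity
  have hinj : Function.Injective τ :=
    ((affineIndependent_iff_not_collinear).2 hncol).injective
  -- angles as vector angles
  have hangle' : ∀ j : Fin 3,
      InnerProductGeometry.angle (τ (j + 1) - τ j) (τ (j + 2) - τ j) = θ j := by
    intro j
    have h := hangle j
    rw [EuclideanGeometry.angle, vsub_eq_sub, vsub_eq_sub] at h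
    exact h
  have hcos : ∀ j : Fin 3, ⟪τ (j + 1) - τ j, τ (j + 2) - τ j⟫
      = Real.cos (θ j) * (‖τ (j + 1) - τ j‖ * ‖τ (j + 2) - τ j‖) := by
    intro j
    have h := InnerProductGeometry.cos_angle_mul_norm_mul_norm (τ (j + 1) - τ j) (τ (j + 2) - τ j)
    rw [hangle' j] at h
    exact h.symm
  -- the law of sines
  have key : ∀ j : Fin 3, Real.sin (θ j) * (‖τ (j + 1) - τ j‖ * ‖τ (j + 2) - τ j‖)
      = Real.sqrt (⟪τ 1 - τ 0, τ 1 - τ 0⟫ * ⟪τ 2 - τ 0, τ 2 - τ 0⟫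
          - ⟪τ 1 - τ 0, τ 2 - τ 0⟫ * ⟪τ 1 - τ 0, τ 2 - τ 0⟫) := by
    intro j
    have h := InnerProductGeometry.sin_angle_mul_norm_mul_norm (τ (j + 1) - τ j) (τ (j + 2) - τ j)
    rw [hangle' j] at h
    rw [h]
    congr 1
    rcases jc j with ⟨h0, h1, h2⟩ | ⟨h0, h1, h2⟩ | ⟨h0, h1, h2⟩ <;> rw [h1, h2, h0] <;>
      simp only [inner_sub_left, inner_sub_right, real_inner_comm (τ 1) (τ 0),
        real_inner_comm (τ 2) (τ 0), real_inner_comm (τ 2) (τ 1)] <;>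
      ring
  have k0 := key 0
  have k1 := key 1
  have k2 := key 2
  simp only [show (0 : Fin 3) + 1 = 1 by decide, show (0 : Fin 3) + 2 = 2 by decide,
    show (1 : Fin 3) + 1 = 2 by decide, show (1 : Fin 3) + 2 = 0 by decide,
    show (2 : Fin 3) + 1 = 0 by decide, show (2 : Fin 3) + 2 = 1 by decide] at k0 k1 k2
  have hA : 0 < ‖τ 1 - τ 0‖ := norm_sub_pos_iff.2 (hinj.ne (by decide))
  have hB : 0 < ‖τ 2 - τ 0‖ := norm_sub_pos_iff.2 (hinj.ne (by decide))
  have hC : 0 < ‖τ 2 - τ 1‖ := norm_sub_pos_iff.2 (hinj.ne (by decide))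
  rw [norm_sub_rev (τ 0) (τ 1)] at k1
  rw [norm_sub_rev (τ 0) (τ 2), norm_sub_rev (τ 1) (τ 2)] at k2
  have h01 : Real.sin (θ 0) * ‖τ 2 - τ 0‖ = Real.sin (θ 1) * ‖τ 2 - τ 1‖ := by
    have h' := k0.trans k1.symm
    exact mul_right_cancel₀ hA.ne' (by linear_combination h')
  have h02 : Real.sin (θ 0) * ‖τ 1 - τ 0‖ = Real.sin (θ 2) * ‖τ 2 - τ 1‖ := by
    have h' := k0.trans k2.symm
    exact mul_right_cancel₀ hB.ne' (by linear_combination h')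
  obtain ⟨d, hd, hL⟩ : ∃ d : ℝ, 0 < d ∧
      ∀ j : Fin 3, ‖τ (j + 1) - τ (j + 2)‖ = Real.sin (θ j) * d := by
    refine ⟨‖τ 2 - τ 1‖ / Real.sin (θ 0), div_pos hC (hsin 0), ?_⟩
    intro j
    rcases jc j with ⟨h0, h1, h2⟩ | ⟨h0, h1, h2⟩ | ⟨h0, h1, h2⟩ <;> rw [h1, h2, h0]
    · rw [norm_sub_rev]; exact (mul_div_cancel₀ _ (hsin 0).ne').symm
    · field_simp [(hsin 0).ne']; linear_combination h01
    · rw [norm_sub_rev]; field_simp [(hsin 0).ne']; linear_combination h02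
  have hLA : ∀ k : Fin 3, ‖τ (k + 1) - τ k‖ = Real.sin (θ (k + 2)) * d := by
    intro k
    have h := hL (k + 2)
    rw [i3, i4] at h
    rw [norm_sub_rev]
    exact h
  have hLB : ∀ k : Fin 3, ‖τ (k + 2) - τ k‖ = Real.sin (θ (k + 1)) * d := by
    intro k
    have h := hL (k + 1)
    rw [i1, i2] at h
    exact h
  have hLC : ∀ k : Fin 3, ‖τ (k + 2) - τ (k + 1)‖ = Real.sin (θ k) * d := by
    intro k
    rw [norm_sub_rev]
    exact hL k
  have hSpos : ∀ j : Fin 3, ∀ x ∈ Set.Icc 0 (θ j), 0 < Real.sin (x + θ (j + 2)) := by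
    intro j x hx
    have h1' := (hpos (j + 2)).1
    have h2' := (hpos (j + 1)).1
    have h3' := hsum3 j
    exact Real.sin_pos_of_pos_of_lt_pi (by linarith [hx.1]) (by linarith [hx.2])
  -- the main computation
  have comp : ∀ (j : Fin 3) (α : ℝ), α ∈ Set.Icc 0 (θ j) →
      ∀ t : ℝ, t = Real.sin (θ j - α) * Real.sin (θ (j + 2)) /
          (Real.sin (α + θ (j + 2)) * Real.sin (θ j)) →
      (0 ≤ t ∧ t ≤ 1) ∧ (τ (j + 1) + t • (τ (j + 2) - τ (j + 1)) ≠ τ j) ∧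
      min (‖τ (j + 1) + t • (τ (j + 2) - τ (j + 1)) - τ (j + 1)‖ + ‖τ (j + 1) - τ (j + 2)‖ +
            ‖τ (j + 2) - τ j‖)
          (‖τ (j + 1) + t • (τ (j + 2) - τ (j + 1)) - τ (j + 2)‖ + ‖τ (j + 2) - τ (j + 1)‖ +
            ‖τ (j + 1) - τ j‖)
        / ‖τ (j + 1) + t • (τ (j + 2) - τ (j + 1)) - τ j‖ = Cexpr θ j α := by
    intro j α hα t ht
    have hip : ⟪τ (j + 1) - τ j, τ (j + 2) - τ (j + 1)⟫
        = -(Real.cos (θ (j + 1)) * ((Real.sin (θ j) * d) * (Real.sin (θ (j + 2)) * d))) := by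
      have h6 := hcos (j + 1)
      rw [i1, i2] at h6
      rw [show τ j - τ (j + 1) = -(τ (j + 1) - τ j) by abel, inner_neg_right, norm_neg] at h6
      rw [real_inner_comm] at h6
      rw [hLC j, hLA j] at h6
      linarith [h6]
    have h := segMinFormula (θ j) (θ (j + 1)) (θ (j + 2)) d t α (τ j) (τ (j + 1)) (τ (j + 2))
      (hpos j).1 (hpos (j + 1)).1 (hpos (j + 2)).1 (hsum3 j) hα hd
      (hL j) (hLA j) (hLB j) hip ht
    refine ⟨h.1, h.2.1, ?_⟩
    rw [h.2.2]
    simp only [Cexpr, i5]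
  -- surjectivity of the angle parametrization
  have hsurj : ∀ j : Fin 3, ∀ t ∈ Set.Icc (0 : ℝ) 1, ∃ α ∈ Set.Icc 0 (θ j),
      Real.sin (θ j - α) * Real.sin (θ (j + 2)) /
        (Real.sin (α + θ (j + 2)) * Real.sin (θ j)) = t := by
    intro j
    exact tSurj (θ j) (θ (j + 2)) (hpos j).1 (hpos (j + 2)).1
      (by linarith [hsum3 j, (hpos (j + 1)).1])
  -- conclusion: the two sets coincide
  rw [Cval]
  congr 1
  ext x
  constructor
  · rintro ⟨j, p, hp, -, rfl⟩
    rw [segment_eq_image'] at hp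
    obtain ⟨t, ht01, hpt⟩ := hp
    have hpt' : p = τ (j + 1) + t • (τ (j + 2) - τ (j + 1)) := hpt.symm
    subst hpt'
    obtain ⟨α, hα, htα⟩ := hsurj j t ht01
    exact ⟨j, α, hα, (comp j α hα t htα.symm).2.2⟩
  · rintro ⟨j, α, hα, rfl⟩
    obtain ⟨⟨ht0, ht1⟩, hne, heq⟩ := comp j α hα _ rfl
    refine ⟨j, τ (j + 1) + (Real.sin (θ j - α) * Real.sin (θ (j + 2)) /
        (Real.sin (α + θ (j + 2)) * Real.sin (θ j))) • (τ (j + 2) - τ (j + 1)), ?_, hne, heq.symm⟩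
    rw [segment_eq_image']
    exact ⟨_, ⟨ht0, ht1⟩, rfl⟩
end
end

section
/- Let S ⊆ ℝ² be finite and in general position and let s, t ∈ S be distinct. If t lies in a positive cone of s, i.e. t ∈ C_{s,i} for some i ∈ {1,2,3}, then there is a path from s to t in the TD_{θ₁,θ₂}-Delaunay graph G of S of total length at most ‖s − t‖ / sin(θ₁/2); in particular d_G(s,t) ≤ ‖s − t‖ / sin(θ₁/2). -/
noncomputable section

-- auxiliary list lemmas

theorem pathLength_nonneg : ∀ P : List Pt, 0 ≤ pathLength P
  | [] => le_refl _
  | [_] => le_refl _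
  | a :: b :: rest => by
      have := pathLength_nonneg (b :: rest)
      simp only [pathLength]
      positivity

theorem pathLength_cons (a m : Pt) (P : List Pt) (h : P.head? = some m) :
    pathLength (a :: P) = ‖a - m‖ + pathLength P := by
  cases P with
  | nil => simp at h
  | cons b l => simp only [List.head?] at h; cases h; rfl

theorem pathLength_concat : ∀ (P : List Pt) (m a : Pt), P.getLast? = some m →
    pathLength (P ++ [a]) = pathLength P + ‖m - a‖
  | [], m, a, h => by simp at h
  | [b], m, a, h => by
      simp only [List.getLast?_singleton, Option.some.injEq] at h
      subst h; simp [pathLength]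
  | b :: c :: l, m, a, h => by
      have h' : (c :: l).getLast? = some m := by
        rw [List.getLast?_cons_cons] at h; exact h
      have ih := pathLength_concat (c :: l) m a h'
      show pathLength (b :: (c :: l ++ [a])) = _
      rw [show (b :: (c :: l ++ [a])) = b :: c :: (l ++ [a]) by simp]
      have e : pathLength (c :: (l ++ [a])) = pathLength ((c :: l) ++ [a]) := rfl
      show _ + pathLength (c :: (l ++ [a])) = _
      rw [e, ih]
      simp only [pathLength]
      ring

theorem pathLength_reverse : ∀ P : List Pt, pathLength P.reverse = pathLength P
  | [] => rfl
  | [_] => rfl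
  | a :: b :: l => by
      have ih := pathLength_reverse (b :: l)
      have hl : (b :: l).reverse.getLast? = some b := by
        rw [List.getLast?_reverse]; rfl
      rw [show (a :: b :: l).reverse = (b :: l).reverse ++ [a] by simp]
      rw [pathLength_concat _ b a hl, ih]
      simp only [pathLength]
      rw [norm_sub_rev b a]; ring

theorem IsPathFrom.reverse {Adj : Pt → Pt → Prop} (hsym : Symmetric Adj)
    {a b : Pt} {P : List Pt} (h : IsPathFrom Adj a b P) :
    IsPathFrom Adj b a P.reverse := by
  obtain ⟨hne, hh, hl, hc⟩ := h
  refine ⟨by simpa using hne, ?_, ?_, ?_⟩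
  · rw [List.head?_reverse]; exact hl
  · rw [List.getLast?_reverse]; exact hh
  · show List.IsChain _ _; rw [List.isChain_reverse]; exact List.IsChain.imp (fun x y h => hsym h) hc

theorem IsPathFrom.cons {Adj : Pt → Pt → Prop} {m b : Pt} {P : List Pt}
    (h : IsPathFrom Adj m b P) (a : Pt) (hadj : Adj a m) :
    IsPathFrom Adj a b (a :: P) := by
  obtain ⟨hne, hh, hl, hc⟩ := h
  cases P with
  | nil => simp at hne
  | cons x l =>
    simp only [List.head?, Option.some.injEq] at hh
    subst hh
    exact ⟨by simp, rfl, by rwa [List.getLast?_cons_cons], List.isChain_cons_cons.2 ⟨hadj, hc⟩⟩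

theorem TDAdj.symm {Δ S : Set Pt} : Symmetric (TDAdj Δ S) := by
  rintro u v ⟨h1, h2, h3, r, hr, w, h4, h5, h6⟩
  exact ⟨h2, h1, h3.symm, r, hr, w, h5, h4, h6⟩


namespace TDP


variable (τ : Fin 3 → Pt)

def U (j : Fin 3) : Pt := τ (j + 1) - τ j
def V (j : Fin 3) : Pt := τ (j - 1) - τ j

lemma Usucc (j : Fin 3) : U τ (j + 1) = V τ j - U τ j := by
  have h1 : j + 1 + 1 = j - 1 := by revert j; decide
  simp only [U, V, h1]; abel

lemma Vsucc (j : Fin 3) : V τ (j + 1) = -U τ j := by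
  have h1 : j + 1 - 1 = j := by revert j; decide
  simp only [U, V, h1]; abel

lemma Upred (j : Fin 3) : U τ (j - 1) = -V τ j := by
  have h1 : j - 1 + 1 = j := by revert j; decide
  simp only [U, V, h1]; abel

lemma Vpred (j : Fin 3) : V τ (j - 1) = U τ j - V τ j := by
  have h1 : j - 1 - 1 = j + 1 := by revert j; decide
  simp only [U, V, h1]; abel

lemma indep (hncol : ¬ Collinear ℝ (Set.range τ)) (j : Fin 3) :
    ∀ x y : ℝ, x • U τ j + y • V τ j = 0 → x = 0 ∧ y = 0 := by
  intro x y h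
  by_contra hcon
  apply hncol
  rw [collinear_iff_exists_forall_eq_smul_vadd]
  have hcover : ∀ k : Fin 3, k = j ∨ k = j + 1 ∨ k = j - 1 :=
    fun k => (by decide : ∀ j' k' : Fin 3, k' = j' ∨ k' = j' + 1 ∨ k' = j' - 1) j k
  rcases eq_or_ne x 0 with hx | hx
  · subst hx
    have hy : y ≠ 0 := by tauto
    have hV : V τ j = 0 := by
      have h0 : y • V τ j = 0 := by simpa using h
      exact (smul_eq_zero.1 h0).resolve_left hy
    have hV' : τ (j - 1) = τ j := by
      have h0 := hV; unfold V at h0; rwa [sub_eq_zero] at h0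
    refine ⟨τ j, U τ j, ?_⟩
    rintro p ⟨k, rfl⟩
    rcases hcover k with hk | hk | hk <;> subst hk
    · exact ⟨0, by simp⟩
    · exact ⟨1, by simp [U]⟩
    · exact ⟨0, by simp [hV']⟩
  · refine ⟨τ j, V τ j, ?_⟩
    rintro p ⟨k, rfl⟩
    rcases hcover k with hk | hk | hk <;> subst hk
    · exact ⟨0, by simp⟩
    · refine ⟨-y / x, ?_⟩
      rw [vadd_eq_add]
      apply smul_right_injective Pt hx
      show x • τ (j + 1) = x • ((-y / x) • V τ j + τ j)
      rw [smul_add, smul_smul]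
      have hc : x * (-y / x) = -y := by field_simp
      rw [hc, ← sub_eq_zero]
      have e : x • τ (j + 1) - ((-y) • V τ j + x • τ j)
          = x • U τ j + y • V τ j := by
        simp only [U, V, smul_sub, neg_smul]; abel
      rw [e]; exact h
    · exact ⟨1, by simp [V]⟩

lemma coord_unique (hncol : ¬ Collinear ℝ (Set.range τ)) (j : Fin 3)
    {x y x' y' : ℝ} (h : x • U τ j + y • V τ j = x' • U τ j + y' • V τ j) :
    x = x' ∧ y = y' := by
  have h0 : (x - x') • U τ j + (y - y') • V τ j = 0 := by
    simp only [sub_smul]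
    rw [← sub_eq_zero] at h
    rw [← h]; abel
  have := indep τ hncol j _ _ h0
  constructor <;> linarith [this.1, this.2]

lemma lindep (hncol : ¬ Collinear ℝ (Set.range τ)) (j : Fin 3) :
    LinearIndependent ℝ ![U τ j, V τ j] := by
  rw [Fintype.linearIndependent_iff]
  intro g hg
  have h2 : g 0 • U τ j + g 1 • V τ j = 0 := by
    rw [Fin.sum_univ_two] at hg; simpa using hg
  have := indep τ hncol j _ _ h2
  intro i; fin_cases i <;> simp [this.1, this.2]

def bas (hncol : ¬ Collinear ℝ (Set.range τ)) (j : Fin 3) : Module.Basis (Fin 2) ℝ Pt :=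
  basisOfLinearIndependentOfCardEqFinrank (lindep τ hncol j) (by simp)

def Phi (hncol : ¬ Collinear ℝ (Set.range τ)) (j : Fin 3) : Pt ≃L[ℝ] (Fin 2 → ℝ) :=
  (bas τ hncol j).equivFun.toContinuousLinearEquiv

lemma Phi_symm (hncol : ¬ Collinear ℝ (Set.range τ)) (j : Fin 3) (w : Fin 2 → ℝ) :
    (Phi τ hncol j).symm w = w 0 • U τ j + w 1 • V τ j := by
  have : (Phi τ hncol j).symm w = (bas τ hncol j).equivFun.symm w := rfl
  rw [this, Module.Basis.equivFun_symm_apply, Fin.sum_univ_two]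
  have hb : ⇑(bas τ hncol j) = ![U τ j, V τ j] :=
    coe_basisOfLinearIndependentOfCardEqFinrank _ _
  rw [hb]; simp

lemma Phi_apply (hncol : ¬ Collinear ℝ (Set.range τ)) (j : Fin 3) (x y : ℝ) :
    Phi τ hncol j (x • U τ j + y • V τ j) = ![x, y] := by
  have := Phi_symm τ hncol j ![x, y]
  simp only [Matrix.cons_val_zero, Matrix.cons_val_one, Matrix.head_cons] at this
  rw [← this]
  exact (Phi τ hncol j).apply_symm_apply _

lemma coord_repr (hncol : ¬ Collinear ℝ (Set.range τ)) (j : Fin 3) (q : Pt) :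
    q = (Phi τ hncol j q 0) • U τ j + (Phi τ hncol j q 1) • V τ j := by
  have := Phi_symm τ hncol j (Phi τ hncol j q)
  rw [(Phi τ hncol j).symm_apply_apply] at this
  exact this



-- K and its interior
def Kset (σ : ℝ) : Set (Fin 2 → ℝ) := {w | 0 ≤ w 0 ∧ 0 ≤ w 1 ∧ w 0 + w 1 ≤ σ}

lemma isClosed_Kset (σ : ℝ) : IsClosed (Kset σ) := by
  have h0 : IsClosed {w : Fin 2 → ℝ | 0 ≤ w 0} := isClosed_le continuous_const (continuous_apply 0)
  have h1 : IsClosed {w : Fin 2 → ℝ | 0 ≤ w 1} := isClosed_le continuous_const (continuous_apply 1)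
  have h2 : IsClosed {w : Fin 2 → ℝ | w 0 + w 1 ≤ σ} :=
    isClosed_le ((continuous_apply 0).add (continuous_apply 1)) continuous_const
  have : Kset σ = {w : Fin 2 → ℝ | 0 ≤ w 0} ∩ ({w | 0 ≤ w 1} ∩ {w | w 0 + w 1 ≤ σ}) := by
    ext w; simp [Kset, Set.mem_setOf_eq, and_assoc]
  rw [this]; exact h0.inter (h1.inter h2)

lemma interior_Kset (σ : ℝ) :
    interior (Kset σ) = {w | 0 < w 0 ∧ 0 < w 1 ∧ w 0 + w 1 < σ} := by
  apply subset_antisymm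
  · intro w hw
    obtain ⟨ε, hε, hball⟩ := Metric.mem_nhds_iff.1 (mem_interior_iff_mem_nhds.1 hw)
    have key : ∀ (i : Fin 2) (c : ℝ), |c| < ε → Function.update w i (w i + c) ∈ Kset σ := by
      intro i c hc
      apply hball
      rw [Metric.mem_ball]
      rw [dist_pi_lt_iff hε]
      intro b
      rcases eq_or_ne b i with rfl | hb
      · rw [Function.update_self, Real.dist_eq, add_sub_cancel_left]; exact hc
      · rw [Function.update_of_ne hb, dist_self]; exact hε
    have hεabs : |(-(ε/2))| < ε := by rw [abs_neg, abs_of_pos (by linarith)]; linarith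
    have hεabs' : |ε/2| < ε := by rw [abs_of_pos (by linarith)]; linarith
    have k0 := key 0 (-(ε/2)) hεabs
    have k1 := key 1 (-(ε/2)) hεabs
    have k2 := key 0 (ε/2) hεabs'
    simp only [Kset, Set.mem_setOf_eq, Function.update_self] at k0 k1 k2
    rw [Function.update_of_ne (by decide)] at k0
    rw [Function.update_of_ne (by decide)] at k1
    rw [Function.update_of_ne (by decide)] at k2
    constructor
    · linarith [k0.1]
    constructor
    · linarith [k1.2.1]
    · linarith [k2.2.2]
  · apply interior_maximal
    · intro w hw; exact ⟨le_of_lt hw.1, le_of_lt hw.2.1, le_of_lt hw.2.2⟩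
    · have o0 : IsOpen {w : Fin 2 → ℝ | 0 < w 0} := isOpen_lt continuous_const (continuous_apply 0)
      have o1 : IsOpen {w : Fin 2 → ℝ | 0 < w 1} := isOpen_lt continuous_const (continuous_apply 1)
      have o2 : IsOpen {w : Fin 2 → ℝ | w 0 + w 1 < σ} :=
        isOpen_lt ((continuous_apply 0).add (continuous_apply 1)) continuous_const
      have : {w : Fin 2 → ℝ | 0 < w 0 ∧ 0 < w 1 ∧ w 0 + w 1 < σ}
          = {w : Fin 2 → ℝ | 0 < w 0} ∩ ({w | 0 < w 1} ∩ {w | w 0 + w 1 < σ}) := by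
        ext w; simp [Set.mem_setOf_eq, and_assoc]
      rw [this]; exact o0.inter (o1.inter o2)



def Tset (j : Fin 3) (A : Pt) (σ : ℝ) : Set Pt :=
  {q | ∃ x y : ℝ, 0 ≤ x ∧ 0 ≤ y ∧ x + y ≤ σ ∧ q = A + x • U τ j + y • V τ j}

def Psi (hncol : ¬ Collinear ℝ (Set.range τ)) (j : Fin 3) (A : Pt) : Pt ≃ₜ (Fin 2 → ℝ) :=
  (Homeomorph.subRight A).trans (Phi τ hncol j).toHomeomorph

lemma Psi_apply (hncol : ¬ Collinear ℝ (Set.range τ)) (j : Fin 3) (A q : Pt) :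
    Psi τ hncol j A q = Phi τ hncol j (q - A) := rfl

lemma Tset_eq (hncol : ¬ Collinear ℝ (Set.range τ)) (j : Fin 3) (A : Pt) (σ : ℝ) :
    Tset τ j A σ = (Psi τ hncol j A) ⁻¹' (Kset σ) := by
  ext q
  simp only [Tset, Set.mem_setOf_eq, Set.mem_preimage, Psi_apply, Kset]
  constructor
  · rintro ⟨x, y, hx, hy, hs, rfl⟩
    have : (A + x • U τ j + y • V τ j) - A = x • U τ j + y • V τ j := by abel
    rw [this, Phi_apply]
    simpa using ⟨hx, hy, hs⟩
  · rintro ⟨h0, h1, hs⟩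
    refine ⟨_, _, h0, h1, hs, ?_⟩
    have := coord_repr τ hncol j (q - A)
    rw [show A + (Phi τ hncol j (q-A) 0) • U τ j + (Phi τ hncol j (q-A) 1) • V τ j
        = A + ((Phi τ hncol j (q-A) 0) • U τ j + (Phi τ hncol j (q-A) 1) • V τ j) by abel,
      ← this]
    abel

lemma interior_Tset (hncol : ¬ Collinear ℝ (Set.range τ)) (j : Fin 3) (A : Pt) (σ : ℝ) (q : Pt) :
    q ∈ interior (Tset τ j A σ) ↔
      ∃ x y : ℝ, 0 < x ∧ 0 < y ∧ x + y < σ ∧ q = A + x • U τ j + y • V τ j := by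
  rw [Tset_eq τ hncol j A σ, ← Homeomorph.preimage_interior, interior_Kset]
  simp only [Set.mem_preimage, Psi_apply, Set.mem_setOf_eq]
  constructor
  · rintro ⟨h0, h1, hs⟩
    refine ⟨_, _, h0, h1, hs, ?_⟩
    have := coord_repr τ hncol j (q - A)
    rw [show A + (Phi τ hncol j (q-A) 0) • U τ j + (Phi τ hncol j (q-A) 1) • V τ j
        = A + ((Phi τ hncol j (q-A) 0) • U τ j + (Phi τ hncol j (q-A) 1) • V τ j) by abel,
      ← this]
    abel
  · rintro ⟨x, y, hx, hy, hs, rfl⟩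
    have : (A + x • U τ j + y • V τ j) - A = x • U τ j + y • V τ j := by abel
    rw [this, Phi_apply]
    simpa using ⟨hx, hy, hs⟩

lemma isClosed_Tset (hncol : ¬ Collinear ℝ (Set.range τ)) (j : Fin 3) (A : Pt) (σ : ℝ) :
    IsClosed (Tset τ j A σ) := by
  rw [Tset_eq τ hncol j A σ]
  exact (isClosed_Kset σ).preimage (Psi τ hncol j A).continuous

lemma point_unique (hncol : ¬ Collinear ℝ (Set.range τ)) (j : Fin 3) (A : Pt)
    {x y x' y' : ℝ} (h : A + x • U τ j + y • V τ j = A + x' • U τ j + y' • V τ j) :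
    x = x' ∧ y = y' := by
  apply coord_unique τ hncol j
  have h' := h
  rw [add_assoc, add_assoc] at h'
  exact add_left_cancel h'

lemma mem_Tset_self (j : Fin 3) (A : Pt) {σ : ℝ} (hσ : 0 ≤ σ) : A ∈ Tset τ j A σ :=
  ⟨0, 0, le_refl _, le_refl _, by linarith, by simp⟩

lemma apex_not_interior (hncol : ¬ Collinear ℝ (Set.range τ)) (j : Fin 3) (A : Pt) (σ : ℝ) :
    A ∉ interior (Tset τ j A σ) := by
  rw [interior_Tset τ hncol]
  rintro ⟨x, y, hx, hy, hs, he⟩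
  have : A + (0:ℝ) • U τ j + (0:ℝ) • V τ j = A + x • U τ j + y • V τ j := by
    rw [← he]; simp
  have := point_unique τ hncol j A this
  linarith [this.1]

lemma far_not_interior (hncol : ¬ Collinear ℝ (Set.range τ)) (j : Fin 3) (A : Pt) {σ x y : ℝ}
    (hs : x + y = σ) :
    A + x • U τ j + y • V τ j ∉ interior (Tset τ j A σ) := by
  rw [interior_Tset τ hncol]
  rintro ⟨x', y', hx', hy', hs', he⟩
  have := point_unique τ hncol j A he
  obtain ⟨rfl, rfl⟩ := this
  linarith

-- convex hull of three points
lemma sum3 {M : Type*} [AddCommMonoid M] (f : Fin 3 → M) (j : Fin 3) :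
    ∑ k, f k = f j + f (j + 1) + f (j - 1) := by
  fin_cases j <;> simp [Fin.sum_univ_three] <;>
    first
      | rfl
      | (show _ = _ + _ + _; abel)

lemma hull3 : convexHull ℝ (Set.range τ) =
    {q | ∃ a : Fin 3 → ℝ, (∀ k, 0 ≤ a k) ∧ (∑ k, a k) = 1 ∧ q = ∑ k, a k • τ k} := by
  apply subset_antisymm
  · apply convexHull_min
    · rintro p ⟨k, rfl⟩
      refine ⟨fun m => if m = k then 1 else 0, fun m => by dsimp only; split <;> norm_num, by simp, ?_⟩
      simp [ite_smul]
    · rintro p ⟨a, ha0, ha1, rfl⟩ q ⟨b, hb0, hb1, rfl⟩ α β hα hβ hαβ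
      refine ⟨fun k => α * a k + β * b k, fun k => add_nonneg (mul_nonneg hα (ha0 k)) (mul_nonneg hβ (hb0 k)), ?_, ?_⟩
      · rw [Finset.sum_add_distrib, ← Finset.mul_sum, ← Finset.mul_sum, ha1, hb1]
        simpa using hαβ
      · rw [Finset.smul_sum, Finset.smul_sum, ← Finset.sum_add_distrib]
        congr 1; ext k
        rw [add_smul, smul_smul, smul_smul]
  · rintro q ⟨a, h0, h1, rfl⟩
    exact Convex.sum_mem (convex_convexHull ℝ _) (fun i _ => h0 i) h1
      (fun i _ => subset_convexHull ℝ _ ⟨i, rfl⟩)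

lemma fin3_ne (j : Fin 3) : j + 1 ≠ j ∧ j - 1 ≠ j ∧ j - 1 ≠ j + 1 :=
  (by decide : ∀ j' : Fin 3, j' + 1 ≠ j' ∧ j' - 1 ≠ j' ∧ j' - 1 ≠ j' + 1) j

lemma Tset_scaledTranslate (j : Fin 3) (A : Pt) {σ : ℝ} (hσ : 0 < σ) :
    Tset τ j A σ = scaledTranslate (Tri τ) σ (A - σ • τ j) := by
  obtain ⟨hne1, hne2, hne3⟩ := fin3_ne j
  ext q
  simp only [scaledTranslate, Tri, Set.mem_image, hull3]
  constructor
  · rintro ⟨x, y, hx, hy, hs, rfl⟩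
    refine ⟨∑ k, (fun k => if k = j then (σ-x-y)/σ else if k = j+1 then x/σ else y/σ) k • τ k,
      ⟨_, fun k => ?_, ?_, rfl⟩, ?_⟩
    · split
      · exact div_nonneg (by linarith) hσ.le
      · split
        · exact div_nonneg hx hσ.le
        · exact div_nonneg hy hσ.le
    · rw [sum3 _ j]
      simp only [if_pos rfl, if_neg hne1, if_neg hne2, if_neg hne3, ↓reduceIte]
      field_simp
      ring
    · rw [sum3 _ j]
      simp only [if_pos rfl, if_neg hne1, if_neg hne2, if_neg hne3, ↓reduceIte]
      simp only [U, V]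
      match_scalars <;> field_simp <;> ring
  · rintro ⟨z, ⟨a, h0, h1, rfl⟩, rfl⟩
    refine ⟨σ * a (j+1), σ * a (j-1), mul_nonneg hσ.le (h0 _), mul_nonneg hσ.le (h0 _), ?_, ?_⟩
    · have hsum := sum3 a j
      rw [h1] at hsum
      nlinarith [h0 j, h0 (j+1), h0 (j-1)]
    · have hsum := sum3 a j
      rw [h1] at hsum
      have haj : a j = 1 - a (j+1) - a (j-1) := by linarith
      rw [sum3 (fun k => a k • τ k) j]
      rw [haj]
      simp only [U, V]
      match_scalars <;> ring

lemma Tset_mono (j : Fin 3) (A : Pt) {σ σ' : ℝ} (h : σ ≤ σ') :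
    Tset τ j A σ ⊆ Tset τ j A σ' := by
  rintro q ⟨x, y, hx, hy, hs, rfl⟩
  exact ⟨x, y, hx, hy, by linarith, rfl⟩



lemma U_ne (hncol : ¬ Collinear ℝ (Set.range τ)) (j : Fin 3) : U τ j ≠ 0 := by
  intro h
  have := indep τ hncol j 1 0 (by simp [h])
  simp at this

lemma V_ne (hncol : ¬ Collinear ℝ (Set.range τ)) (j : Fin 3) : V τ j ≠ 0 := by
  intro h
  have := indep τ hncol j 0 1 (by simp [h])
  simp at this

lemma UV_ne (hncol : ¬ Collinear ℝ (Set.range τ)) (j : Fin 3) : U τ j - V τ j ≠ 0 := by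
  intro h
  have := indep τ hncol j 1 (-1) (by rw [← h]; module)
  simp at this

variable (θ : Fin 3 → ℝ)

lemma innerU (hncol : ¬ Collinear ℝ (Set.range τ))
    (hangle : ∀ j : Fin 3, EuclideanGeometry.angle (τ (j + 1)) (τ j) (τ (j - 1)) = θ j)
    (j : Fin 3) :
    (inner ℝ (U τ j) (V τ j - U τ j) : ℝ)
      = -(‖U τ j‖ * ‖V τ j - U τ j‖ * Real.cos (θ (j + 1))) := by
  have h1 : j + 1 + 1 = j - 1 := (by decide : ∀ j' : Fin 3, j' + 1 + 1 = j' - 1) j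
  have h2 : j + 1 - 1 = j := (by decide : ∀ j' : Fin 3, j' + 1 - 1 = j') j
  have ha := hangle (j + 1)
  rw [h1, h2] at ha
  rw [EuclideanGeometry.angle] at ha
  have hv1 : τ (j - 1) -ᵥ τ (j + 1) = V τ j - U τ j := by
    simp only [U, V, vsub_eq_sub]; abel
  have hv2 : τ j -ᵥ τ (j + 1) = -U τ j := by
    simp only [U, vsub_eq_sub]; abel
  rw [hv1, hv2] at ha
  have hcos := InnerProductGeometry.cos_angle (V τ j - U τ j) (-U τ j)
  rw [ha] at hcos
  have hnU : ‖U τ j‖ ≠ 0 := norm_ne_zero_iff.2 (U_ne τ hncol j)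
  have hnVU : ‖V τ j - U τ j‖ ≠ 0 := by
    rw [norm_ne_zero_iff]
    intro h
    apply UV_ne τ hncol j
    rw [← neg_eq_zero, ← h]; abel
  have hprod : ‖V τ j - U τ j‖ * ‖-U τ j‖ ≠ 0 := by
    rw [norm_neg]; exact mul_ne_zero hnVU hnU
  have hinner : (inner ℝ (V τ j - U τ j) (-U τ j) : ℝ)
      = Real.cos (θ (j + 1)) * (‖V τ j - U τ j‖ * ‖-U τ j‖) :=
    (div_eq_iff hprod).1 hcos.symm
  rw [inner_neg_right] at hinner
  have : (inner ℝ (U τ j) (V τ j - U τ j) : ℝ) = inner ℝ (V τ j - U τ j) (U τ j) :=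
    real_inner_comm _ _
  rw [this]
  rw [norm_neg] at hinner
  linarith [hinner]

lemma innerV (hncol : ¬ Collinear ℝ (Set.range τ))
    (hangle : ∀ j : Fin 3, EuclideanGeometry.angle (τ (j + 1)) (τ j) (τ (j - 1)) = θ j)
    (j : Fin 3) :
    (inner ℝ (V τ j) (U τ j - V τ j) : ℝ)
      = -(‖V τ j‖ * ‖U τ j - V τ j‖ * Real.cos (θ (j - 1))) := by
  have h1 : j - 1 + 1 = j := (by decide : ∀ j' : Fin 3, j' - 1 + 1 = j') j
  have h2 : j - 1 - 1 = j + 1 := (by decide : ∀ j' : Fin 3, j' - 1 - 1 = j' + 1) j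
  have ha := hangle (j - 1)
  rw [h1, h2] at ha
  rw [EuclideanGeometry.angle] at ha
  have hv1 : τ j -ᵥ τ (j - 1) = -V τ j := by
    simp only [V, vsub_eq_sub]; abel
  have hv2 : τ (j + 1) -ᵥ τ (j - 1) = U τ j - V τ j := by
    simp only [U, V, vsub_eq_sub]; abel
  rw [hv1, hv2] at ha
  have hcos := InnerProductGeometry.cos_angle (-V τ j) (U τ j - V τ j)
  rw [ha] at hcos
  have hnV : ‖V τ j‖ ≠ 0 := norm_ne_zero_iff.2 (V_ne τ hncol j)
  have hnUV : ‖U τ j - V τ j‖ ≠ 0 := norm_ne_zero_iff.2 (UV_ne τ hncol j)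
  have hprod : ‖-V τ j‖ * ‖U τ j - V τ j‖ ≠ 0 := by
    rw [norm_neg]; exact mul_ne_zero hnV hnUV
  have hinner : (inner ℝ (-V τ j) (U τ j - V τ j) : ℝ)
      = Real.cos (θ (j - 1)) * (‖-V τ j‖ * ‖U τ j - V τ j‖) :=
    (div_eq_iff hprod).1 hcos.symm
  rw [inner_neg_left, norm_neg] at hinner
  linarith [hinner]

lemma corner_core {s0 c : ℝ} (hs0 : 0 ≤ s0) (hs1 : s0 ≤ 1) (hc : c ≤ 1 - 2 * s0 ^ 2)
    (w1 w2 : Pt) (hinner : (inner ℝ w1 w2 : ℝ) = -(‖w1‖ * ‖w2‖ * c))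
    {P Q : ℝ} (hP : 0 ≤ P) (hQ : 0 ≤ Q) :
    s0 * (P * ‖w1‖ + Q * ‖w2‖) ≤ ‖P • w1 + Q • w2‖ := by
  set p := P * ‖w1‖ with hp
  set q := Q * ‖w2‖ with hq
  have hp0 : 0 ≤ p := mul_nonneg hP (norm_nonneg _)
  have hq0 : 0 ≤ q := mul_nonneg hQ (norm_nonneg _)
  have hz : ‖P • w1 + Q • w2‖ ^ 2 = p ^ 2 + q ^ 2 - 2 * p * q * c := by
    rw [norm_add_sq_real]
    rw [real_inner_smul_left, real_inner_smul_right, hinner]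
    rw [norm_smul, norm_smul, Real.norm_eq_abs, Real.norm_eq_abs,
      abs_of_nonneg hP, abs_of_nonneg hQ]
    ring
  have key : (s0 * (p + q)) ^ 2 ≤ ‖P • w1 + Q • w2‖ ^ 2 := by
    rw [hz]
    have e1 : p ^ 2 + q ^ 2 - 2 * p * q * c ≥ (p - q) ^ 2 + 4 * p * q * s0 ^ 2 := by
      nlinarith [mul_nonneg hp0 hq0]
    have hs2 : s0 ^ 2 ≤ 1 := by nlinarith
    have e3 : s0 ^ 2 * (p - q) ^ 2 ≤ (p - q) ^ 2 := by
      nlinarith [sq_nonneg (p - q), hs2]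
    nlinarith [mul_nonneg hp0 hq0]
  have hnn : 0 ≤ s0 * (p + q) := mul_nonneg hs0 (by linarith)
  calc s0 * (p + q) = Real.sqrt ((s0 * (p + q)) ^ 2) := (Real.sqrt_sq hnn).symm
    _ ≤ Real.sqrt (‖P • w1 + Q • w2‖ ^ 2) := Real.sqrt_le_sqrt key
    _ = ‖P • w1 + Q • w2‖ := Real.sqrt_sq (norm_nonneg _)

lemma angle_range (hangle : ∀ j : Fin 3, EuclideanGeometry.angle (τ (j + 1)) (τ j) (τ (j - 1)) = θ j)
    (k : Fin 3) : 0 ≤ θ k ∧ θ k ≤ Real.pi := by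
  rw [← hangle k]
  exact ⟨EuclideanGeometry.angle_nonneg _ _ _, EuclideanGeometry.angle_le_pi _ _ _⟩

lemma theta0_le (hθ01 : θ 0 ≤ θ 1) (hθ12 : θ 1 ≤ θ 2) (k : Fin 3) : θ 0 ≤ θ k := by
  fin_cases k
  · exact le_refl _
  · exact hθ01
  · exact hθ01.trans hθ12

lemma sin_half_pos (hθ0 : 0 < θ 0)
    (hangle : ∀ j : Fin 3, EuclideanGeometry.angle (τ (j + 1)) (τ j) (τ (j - 1)) = θ j) :
    0 < Real.sin (θ 0 / 2) := by
  apply Real.sin_pos_of_pos_of_lt_pi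
  · linarith
  · have := (angle_range τ θ hangle 0).2
    have hpi := Real.pi_pos
    linarith

lemma cos_le_core (hθ0 : 0 < θ 0) (hθ01 : θ 0 ≤ θ 1) (hθ12 : θ 1 ≤ θ 2)
    (hangle : ∀ j : Fin 3, EuclideanGeometry.angle (τ (j + 1)) (τ j) (τ (j - 1)) = θ j)
    (k : Fin 3) : Real.cos (θ k) ≤ 1 - 2 * Real.sin (θ 0 / 2) ^ 2 := by
  have hcos0 : Real.cos (θ 0) = 1 - 2 * Real.sin (θ 0 / 2) ^ 2 := by
    rw [show θ 0 = 2 * (θ 0 / 2) by ring, Real.cos_two_mul, Real.cos_sq']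
    ring
  rw [← hcos0]
  exact Real.cos_le_cos_of_nonneg_of_le_pi hθ0.le (angle_range τ θ hangle k).2
    (theta0_le θ hθ01 hθ12 k)

lemma cornerU_bound (hncol : ¬ Collinear ℝ (Set.range τ)) (hθ0 : 0 < θ 0)
    (hθ01 : θ 0 ≤ θ 1) (hθ12 : θ 1 ≤ θ 2)
    (hangle : ∀ j : Fin 3, EuclideanGeometry.angle (τ (j + 1)) (τ j) (τ (j - 1)) = θ j)
    (j : Fin 3) {X Y : ℝ} (hX : 0 ≤ X) (hY : 0 ≤ Y) :
    (X + Y) * ‖U τ j‖ + Y * ‖U τ j - V τ j‖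
      ≤ ‖X • U τ j + Y • V τ j‖ / Real.sin (θ 0 / 2) := by
  have hs0 := sin_half_pos τ θ hθ0 hangle
  have core := corner_core (s0 := Real.sin (θ 0 / 2)) (c := Real.cos (θ (j + 1)))
    hs0.le (Real.sin_le_one _) (cos_le_core τ θ hθ0 hθ01 hθ12 hangle (j + 1))
    (U τ j) (V τ j - U τ j) (innerU τ θ hncol hangle j)
    (P := X + Y) (Q := Y) (by linarith) hY
  have hz : (X + Y) • U τ j + Y • (V τ j - U τ j) = X • U τ j + Y • V τ j := by
    module
  rw [hz] at core
  rw [le_div_iff₀ hs0]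
  rw [norm_sub_rev (U τ j) (V τ j)]
  linarith [core]

lemma cornerV_bound (hncol : ¬ Collinear ℝ (Set.range τ)) (hθ0 : 0 < θ 0)
    (hθ01 : θ 0 ≤ θ 1) (hθ12 : θ 1 ≤ θ 2)
    (hangle : ∀ j : Fin 3, EuclideanGeometry.angle (τ (j + 1)) (τ j) (τ (j - 1)) = θ j)
    (j : Fin 3) {X Y : ℝ} (hX : 0 ≤ X) (hY : 0 ≤ Y) :
    (X + Y) * ‖V τ j‖ + X * ‖U τ j - V τ j‖
      ≤ ‖X • U τ j + Y • V τ j‖ / Real.sin (θ 0 / 2) := by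
  have hs0 := sin_half_pos τ θ hθ0 hangle
  have core := corner_core (s0 := Real.sin (θ 0 / 2)) (c := Real.cos (θ (j - 1)))
    hs0.le (Real.sin_le_one _) (cos_le_core τ θ hθ0 hθ01 hθ12 hangle (j - 1))
    (V τ j) (U τ j - V τ j) (innerV τ θ hncol hangle j)
    (P := X + Y) (Q := X) (by linarith) hX
  have hz : (X + Y) • V τ j + X • (U τ j - V τ j) = X • U τ j + Y • V τ j := by
    module
  rw [hz] at core
  rw [le_div_iff₀ hs0]
  linarith [core]



-- PART 6: Reach and adjacency support
variable (S : Finset Pt)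

def Reach (A B : Pt) (L : ℝ) : Prop :=
  ∃ P : List Pt, IsPathFrom (TDAdj (Tri τ) ↑S) A B P ∧ pathLength P ≤ L

lemma Reach_mono {A B : Pt} {L L' : ℝ} (h : Reach τ S A B L) (hL : L ≤ L') :
    Reach τ S A B L' := by
  obtain ⟨P, h1, h2⟩ := h
  exact ⟨P, h1, h2.trans hL⟩

lemma Reach_symm {A B : Pt} {L : ℝ} (h : Reach τ S A B L) : Reach τ S B A L := by
  obtain ⟨P, h1, h2⟩ := h
  exact ⟨P.reverse, h1.reverse TDAdj.symm, by rwa [pathLength_reverse]⟩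

lemma Reach_single {A B : Pt} (hadj : TDAdj (Tri τ) ↑S A B) : Reach τ S A B ‖A - B‖ := by
  refine ⟨[A, B], ⟨by simp, rfl, rfl, ?_⟩, ?_⟩
  · exact List.isChain_cons_cons.2 ⟨hadj, List.isChain_singleton _⟩
  · simp [pathLength]

lemma Reach_step {A p B : Pt} {L : ℝ} (hadj : TDAdj (Tri τ) ↑S A p)
    (h : Reach τ S p B L) : Reach τ S A B (‖A - p‖ + L) := by
  obtain ⟨P, ⟨hne, hh, hl, hc⟩, h2⟩ := h
  refine ⟨A :: P, IsPathFrom.cons ⟨hne, hh, hl, hc⟩ A hadj, ?_⟩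
  cases P with
  | nil => simp at hne
  | cons x l =>
    simp only [List.head?, Option.some.injEq] at hh
    subst hh
    rw [pathLength_cons A x (x :: l) rfl]
    linarith

lemma adj_of_empty (hncol : ¬ Collinear ℝ (Set.range τ)) {j : Fin 3} {A : Pt} {σ : ℝ}
    (hσ : 0 < σ) {a b : Pt}
    (ha : a ∈ S) (hb : b ∈ S) (hab : a ≠ b)
    (haT : a ∈ Tset τ j A σ) (hai : a ∉ interior (Tset τ j A σ))
    (hbT : b ∈ Tset τ j A σ) (hbi : b ∉ interior (Tset τ j A σ))
    (hempty : ∀ q ∈ (↑S : Set Pt), q ∉ interior (Tset τ j A σ)) :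
    TDAdj (Tri τ) ↑S a b := by
  refine ⟨ha, hb, hab, σ, hσ, A - σ • τ j, ?_, ?_, ?_⟩
  · rw [← Tset_scaledTranslate τ j A hσ, (isClosed_Tset τ hncol j A σ).frontier_eq]
    exact ⟨haT, hai⟩
  · rw [← Tset_scaledTranslate τ j A hσ, (isClosed_Tset τ hncol j A σ).frontier_eq]
    exact ⟨hbT, hbi⟩
  · intro x hx
    rw [← Tset_scaledTranslate τ j A hσ]
    exact hempty x hx

def cU (j : Fin 3) (X Y : ℝ) : ℝ := (X + Y) * ‖U τ j‖ + Y * ‖U τ j - V τ j‖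
def cV (j : Fin 3) (X Y : ℝ) : ℝ := (X + Y) * ‖V τ j‖ + X * ‖U τ j - V τ j‖

lemma cU_def (j : Fin 3) (a b : ℝ) :
    cU τ j a b = (a + b) * ‖U τ j‖ + b * ‖U τ j - V τ j‖ := rfl
lemma cV_def (j : Fin 3) (a b : ℝ) :
    cV τ j a b = (a + b) * ‖V τ j‖ + a * ‖U τ j - V τ j‖ := rfl

lemma htriU (j : Fin 3) : ‖U τ j‖ ≤ ‖V τ j‖ + ‖U τ j - V τ j‖ := by
  have e : U τ j = V τ j + (U τ j - V τ j) := by abel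
  calc ‖U τ j‖ = ‖V τ j + (U τ j - V τ j)‖ := by rw [← e]
    _ ≤ _ := norm_add_le _ _

lemma htriV (j : Fin 3) : ‖V τ j‖ ≤ ‖U τ j‖ + ‖U τ j - V τ j‖ := by
  have e : V τ j = U τ j - (U τ j - V τ j) := by abel
  calc ‖V τ j‖ = ‖U τ j - (U τ j - V τ j)‖ := by rw [← e]
    _ ≤ _ := norm_sub_le _ _

lemma norm_comb_le {x y : ℝ} (hx : 0 ≤ x) (hy : 0 ≤ y) (a b : Pt) :
    ‖x • a + y • b‖ ≤ x * ‖a‖ + y * ‖b‖ := by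
  calc ‖x • a + y • b‖ ≤ ‖x • a‖ + ‖y • b‖ := norm_add_le _ _
    _ = x * ‖a‖ + y * ‖b‖ := by
        rw [norm_smul, norm_smul, Real.norm_eq_abs, Real.norm_eq_abs,
          abs_of_nonneg hx, abs_of_nonneg hy]

def csum (hncol : ¬ Collinear ℝ (Set.range τ)) (j : Fin 3) (A q : Pt) : ℝ :=
  Phi τ hncol j (q - A) 0 + Phi τ hncol j (q - A) 1

lemma csum_eq (hncol : ¬ Collinear ℝ (Set.range τ)) (j : Fin 3) (A : Pt) {q : Pt} {x y : ℝ}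
    (h : q = A + x • U τ j + y • V τ j) : csum τ hncol j A q = x + y := by
  have hq : q - A = x • U τ j + y • V τ j := by rw [h]; abel
  rw [csum, hq, Phi_apply]
  simp


-- PART 7: the main induction
lemma edge_case (hncol : ¬ Collinear ℝ (Set.range τ)) {j : Fin 3} {A B : Pt} {X Y : ℝ}
    (hA : A ∈ S) (hB : B ∈ S) (hAB : A ≠ B) (hX : 0 ≤ X) (hY : 0 ≤ Y)
    (hrep : B = A + X • U τ j + Y • V τ j)
    (hemp : ∀ q ∈ (↑S : Set Pt), q ∉ interior (Tset τ j A (X + Y))) :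
    Reach τ S A B (cU τ j X Y) ∧ Reach τ S A B (cV τ j X Y) := by
  have hσ : 0 < X + Y := by
    rcases (add_nonneg hX hY).lt_or_eq with h | h
    · exact h
    · exfalso
      apply hAB
      have hX0 : X = 0 := by linarith
      have hY0 : Y = 0 := by linarith
      rw [hrep, hX0, hY0]; simp
  have hBT : B ∈ Tset τ j A (X + Y) := ⟨X, Y, hX, hY, le_refl _, hrep⟩
  have hBI : B ∉ interior (Tset τ j A (X + Y)) := by
    rw [hrep]; exact far_not_interior τ hncol j A rfl
  have hadj : TDAdj (Tri τ) ↑S A B :=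
    adj_of_empty τ S hncol hσ hA hB hAB (mem_Tset_self τ j A hσ.le)
      (apex_not_interior τ hncol j A _) hBT hBI hemp
  have hlen : ‖A - B‖ ≤ X * ‖U τ j‖ + Y * ‖V τ j‖ := by
    have e : A - B = -(X • U τ j + Y • V τ j) := by rw [hrep]; abel
    rw [e, norm_neg]
    exact norm_comb_le hX hY _ _
  have hR := Reach_single τ S hadj
  have h1 := htriU τ j
  have h2 := htriV τ j
  constructor
  · apply Reach_mono τ S hR
    rw [cU]
    nlinarith [mul_le_mul_of_nonneg_left h2 hY]
  · apply Reach_mono τ S hR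
    rw [cV]
    nlinarith [mul_le_mul_of_nonneg_left h1 hX]

set_option maxHeartbeats 3200000 in
lemma main (hncol : ¬ Collinear ℝ (Set.range τ)) :
    ∀ n : ℕ, ∀ (j : Fin 3) (A B : Pt) (X Y : ℝ),
    A ∈ S → B ∈ S → A ≠ B → 0 ≤ X → 0 ≤ Y → B = A + X • U τ j + Y • V τ j →
    ((↑S : Set Pt) ∩ interior (Tset τ j A (X + Y))).ncard ≤ n →
    ((∀ q x y, q ∈ S → 0 < x → 0 < y → x + y < X + Y →
        q = A + x • U τ j + y • V τ j → x ≤ X) → Reach τ S A B (cV τ j X Y))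
    ∧ ((∀ q x y, q ∈ S → 0 < x → 0 < y → x + y < X + Y →
        q = A + x • U τ j + y • V τ j → y ≤ Y) → Reach τ S A B (cU τ j X Y))
    ∧ (Reach τ S A B (cU τ j X Y) ∨ Reach τ S A B (cV τ j X Y)) := by
  intro n
  induction n with
  | zero =>
    intro j A B X Y hA hB hAB hX hY hrep hcard
    have hemp : ∀ q ∈ (↑S : Set Pt), q ∉ interior (Tset τ j A (X + Y)) := by
      intro q hq hqint
      have hfin : ((↑S : Set Pt) ∩ interior (Tset τ j A (X + Y))).Finite :=
        S.finite_toSet.inter_of_left _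
      have hev : ((↑S : Set Pt) ∩ interior (Tset τ j A (X + Y))) = ∅ := by
        rw [← Set.ncard_eq_zero hfin]; omega
      have hmem : q ∈ (↑S : Set Pt) ∩ interior (Tset τ j A (X + Y)) := ⟨hq, hqint⟩
      rw [hev] at hmem
      exact hmem
    obtain ⟨hu, hv⟩ := edge_case τ S hncol hA hB hAB hX hY hrep hemp
    exact ⟨fun _ => hv, fun _ => hu, Or.inl hu⟩
  | succ m ih =>
    intro j A B X Y hA hB hAB hX hY hrep hcard
    by_cases hemp0 : ((↑S : Set Pt) ∩ interior (Tset τ j A (X + Y))) = ∅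
    · have hemp : ∀ q ∈ (↑S : Set Pt), q ∉ interior (Tset τ j A (X + Y)) := by
        intro q hq hqint
        have hmem : q ∈ (↑S : Set Pt) ∩ interior (Tset τ j A (X + Y)) := ⟨hq, hqint⟩
        rw [hemp0] at hmem
        exact hmem
      obtain ⟨hu, hv⟩ := edge_case τ S hncol hA hB hAB hX hY hrep hemp
      exact ⟨fun _ => hv, fun _ => hu, Or.inl hu⟩
    · -- nonempty: first hit
      have hfin : ((↑S : Set Pt) ∩ interior (Tset τ j A (X + Y))).Finite :=
        S.finite_toSet.inter_of_left _
      have hne : hfin.toFinset.Nonempty := by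
        rw [Set.Finite.toFinset_nonempty]
        exact Set.nonempty_iff_ne_empty.2 hemp0
      obtain ⟨p, hpF, hpmin⟩ := Finset.exists_min_image hfin.toFinset (csum τ hncol j A) hne
      rw [Set.Finite.mem_toFinset] at hpF
      obtain ⟨hpS, hpint⟩ := hpF
      obtain ⟨x₁, y₁, hx₁, hy₁, hs₁, hp⟩ := (interior_Tset τ hncol j A (X + Y) p).1 hpint
      have hpS' : p ∈ S := by exact_mod_cast hpS
      have hcs : csum τ hncol j A p = x₁ + y₁ := csum_eq τ hncol j A hp
      have hEmpty : ∀ q ∈ (↑S : Set Pt), q ∉ interior (Tset τ j A (x₁ + y₁)) := by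
        intro q hq hqint
        obtain ⟨x, y, hx, hy, hs, hqrep⟩ := (interior_Tset τ hncol j A _ q).1 hqint
        have hqbig : q ∈ interior (Tset τ j A (X + Y)) := by
          rw [interior_Tset τ hncol]
          exact ⟨x, y, hx, hy, by linarith, hqrep⟩
        have hqF : q ∈ hfin.toFinset := by
          rw [Set.Finite.mem_toFinset]; exact ⟨hq, hqbig⟩
        have hmin := hpmin q hqF
        rw [hcs, csum_eq τ hncol j A hqrep] at hmin
        linarith
      have hAp : A ≠ p := by
        intro h
        have e : A + (0:ℝ) • U τ j + (0:ℝ) • V τ j = A + x₁ • U τ j + y₁ • V τ j := by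
          rw [← hp, ← h]; simp
        have := (point_unique τ hncol j A e).1
        linarith
      have hadj : TDAdj (Tri τ) ↑S A p := by
        apply adj_of_empty τ S hncol (by linarith : (0:ℝ) < x₁ + y₁) hA hpS' hAp
          (mem_Tset_self τ j A (by linarith)) (apex_not_interior τ hncol j A _)
          ⟨x₁, y₁, hx₁.le, hy₁.le, le_refl _, hp⟩ ?_ hEmpty
        rw [hp]; exact far_not_interior τ hncol j A rfl
      have hlen : ‖A - p‖ ≤ x₁ * ‖U τ j‖ + y₁ * ‖V τ j‖ := by
        have e : A - p = -(x₁ • U τ j + y₁ • V τ j) := by rw [hp]; abel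
        rw [e, norm_neg]
        exact norm_comb_le hx₁.le hy₁.le _ _
      have hpB : p ≠ B := by
        intro h
        have hBint : B ∈ interior (Tset τ j A (X + Y)) := h ▸ hpint
        rw [hrep] at hBint
        exact far_not_interior τ hncol j A rfl hBint
      have h1 := htriU τ j
      have h2 := htriV τ j
      have hUn := norm_nonneg (U τ j)
      have hVn := norm_nonneg (V τ j)
      have hUVn := norm_nonneg (U τ j - V τ j)
      -- BAD CASE Y : y₁ > Y, gives cV
      have badY : Y < y₁ → Reach τ S A B (cV τ j X Y) := by
        intro hbad
        have hX₂ : (0:ℝ) < y₁ - Y := by linarith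
        have hY₂ : (0:ℝ) < X + Y - x₁ - y₁ := by linarith
        have hrep₂ : p = B + (y₁ - Y) • U τ (j + 1) + (X + Y - x₁ - y₁) • V τ (j + 1) := by
          rw [hrep, hp, Usucc, Vsucc]; module
        have hinv : ∀ q x y, q ∈ S → 0 < x → 0 < y →
            x + y < (y₁ - Y) + (X + Y - x₁ - y₁) →
            q = B + x • U τ (j + 1) + y • V τ (j + 1) → y ≤ X + Y - x₁ - y₁ := by
          intro q x y hq hx hy hxy hqrep
          by_contra hcon
          push_neg at hcon
          apply hEmpty q hq
          rw [interior_Tset τ hncol]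
          refine ⟨X - x - y, Y + x, by linarith, by linarith, by linarith, ?_⟩
          rw [hqrep, hrep, Usucc, Vsucc]; module
        have hsub : ((↑S : Set Pt) ∩
            interior (Tset τ (j + 1) B ((y₁ - Y) + (X + Y - x₁ - y₁)))).ncard ≤ m := by
          have hss : ((↑S : Set Pt) ∩ interior (Tset τ (j + 1) B ((y₁ - Y) + (X + Y - x₁ - y₁))))
              ⊂ ((↑S : Set Pt) ∩ interior (Tset τ j A (X + Y))) := by
            constructor
            · rintro q ⟨hq, hqint⟩
              obtain ⟨x, y, hx, hy, hxy, hqrep⟩ := (interior_Tset τ hncol _ _ _ q).1 hqint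
              refine ⟨hq, ?_⟩
              rw [interior_Tset τ hncol]
              refine ⟨X - x - y, Y + x, by linarith, by linarith, by linarith, ?_⟩
              rw [hqrep, hrep, Usucc, Vsucc]; module
            · intro hsuper
              obtain ⟨_, hqint⟩ := hsuper ⟨hpS, hpint⟩
              revert hqint
              rw [hrep₂]
              exact far_not_interior τ hncol (j + 1) B rfl
          have := Set.ncard_lt_ncard hss hfin
          omega
        have IH := (ih (j + 1) B p (y₁ - Y) (X + Y - x₁ - y₁) hB hpS' hpB.symm
          hX₂.le hY₂.le hrep₂ hsub).2.1 hinv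
        have IH' := Reach_symm τ S IH
        have hfull := Reach_step τ S hadj IH'
        apply Reach_mono τ S hfull
        have n1 : ‖U τ (j + 1)‖ = ‖U τ j - V τ j‖ := by rw [Usucc, norm_sub_rev]
        have n2 : ‖U τ (j + 1) - V τ (j + 1)‖ = ‖V τ j‖ := by
          rw [Usucc, Vsucc]
          have e1 : V τ j - U τ j - -U τ j = V τ j := by abel
          rw [e1]
        have hcUeq : cU τ (j + 1) (y₁ - Y) (X + Y - x₁ - y₁)
            = ((y₁ - Y) + (X + Y - x₁ - y₁)) * ‖U τ j - V τ j‖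
              + (X + Y - x₁ - y₁) * ‖V τ j‖ := by
          rw [cU_def, n1, n2]
        rw [hcUeq, cV_def]
        nlinarith [mul_le_mul_of_nonneg_left h1 hx₁.le]
      -- BAD CASE X : x₁ > X, gives cU
      have badX : X < x₁ → Reach τ S A B (cU τ j X Y) := by
        intro hbad
        have hY₃ : (0:ℝ) < x₁ - X := by linarith
        have hX₃ : (0:ℝ) < X + Y - x₁ - y₁ := by linarith
        have hrep₃ : p = B + (X + Y - x₁ - y₁) • U τ (j - 1) + (x₁ - X) • V τ (j - 1) := by
          rw [hrep, hp, Upred, Vpred]; module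
        have hinv : ∀ q x y, q ∈ S → 0 < x → 0 < y →
            x + y < (X + Y - x₁ - y₁) + (x₁ - X) →
            q = B + x • U τ (j - 1) + y • V τ (j - 1) → x ≤ X + Y - x₁ - y₁ := by
          intro q x y hq hx hy hxy hqrep
          by_contra hcon
          push_neg at hcon
          apply hEmpty q hq
          rw [interior_Tset τ hncol]
          refine ⟨X + y, Y - x - y, by linarith, by linarith, by linarith, ?_⟩
          rw [hqrep, hrep, Upred, Vpred]; module
        have hsub : ((↑S : Set Pt) ∩
            interior (Tset τ (j - 1) B ((X + Y - x₁ - y₁) + (x₁ - X)))).ncard ≤ m := by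
          have hss : ((↑S : Set Pt) ∩ interior (Tset τ (j - 1) B ((X + Y - x₁ - y₁) + (x₁ - X))))
              ⊂ ((↑S : Set Pt) ∩ interior (Tset τ j A (X + Y))) := by
            constructor
            · rintro q ⟨hq, hqint⟩
              obtain ⟨x, y, hx, hy, hxy, hqrep⟩ := (interior_Tset τ hncol _ _ _ q).1 hqint
              refine ⟨hq, ?_⟩
              rw [interior_Tset τ hncol]
              refine ⟨X + y, Y - x - y, by linarith, by linarith, by linarith, ?_⟩
              rw [hqrep, hrep, Upred, Vpred]; module
            · intro hsuper
              obtain ⟨_, hqint⟩ := hsuper ⟨hpS, hpint⟩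
              revert hqint
              rw [hrep₃]
              exact far_not_interior τ hncol (j - 1) B rfl
          have := Set.ncard_lt_ncard hss hfin
          omega
        have IH := (ih (j - 1) B p (X + Y - x₁ - y₁) (x₁ - X) hB hpS' hpB.symm
          hX₃.le hY₃.le hrep₃ hsub).1 hinv
        have IH' := Reach_symm τ S IH
        have hfull := Reach_step τ S hadj IH'
        apply Reach_mono τ S hfull
        have n3 : ‖V τ (j - 1)‖ = ‖U τ j - V τ j‖ := by rw [Vpred]
        have n4 : ‖U τ (j - 1) - V τ (j - 1)‖ = ‖U τ j‖ := by
          rw [Upred, Vpred]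
          have e1 : -V τ j - (U τ j - V τ j) = -U τ j := by abel
          rw [e1, norm_neg]
        have hcVeq : cV τ (j - 1) (X + Y - x₁ - y₁) (x₁ - X)
            = ((X + Y - x₁ - y₁) + (x₁ - X)) * ‖U τ j - V τ j‖
              + (X + Y - x₁ - y₁) * ‖U τ j‖ := by
          rw [cV_def, n3, n4]
        rw [hcVeq, cU_def]
        nlinarith [mul_le_mul_of_nonneg_left h2 hy₁.le]
      -- GOOD CASE shared pieces
      have goodRep : B = p + (X - x₁) • U τ j + (Y - y₁) • V τ j := by
        rw [hrep, hp]; module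
      have goodCard : ((↑S : Set Pt) ∩
          interior (Tset τ j p ((X - x₁) + (Y - y₁)))).ncard ≤ m := by
        have hss : ((↑S : Set Pt) ∩ interior (Tset τ j p ((X - x₁) + (Y - y₁))))
            ⊂ ((↑S : Set Pt) ∩ interior (Tset τ j A (X + Y))) := by
          constructor
          · rintro q ⟨hq, hqint⟩
            obtain ⟨x, y, hx, hy, hxy, hqrep⟩ := (interior_Tset τ hncol _ _ _ q).1 hqint
            refine ⟨hq, ?_⟩
            rw [interior_Tset τ hncol]
            refine ⟨x₁ + x, y₁ + y, by linarith, by linarith, by linarith, ?_⟩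
            rw [hqrep, hp]; module
          · intro hsuper
            obtain ⟨_, hqint⟩ := hsuper ⟨hpS, hpint⟩
            exact absurd hqint (apex_not_interior τ hncol j p _)
        have := Set.ncard_lt_ncard hss hfin
        omega
      refine ⟨?_, ?_, ?_⟩
      · -- component 1 : inv-x → cV
        intro hinvX
        have hx₁X : x₁ ≤ X := hinvX p x₁ y₁ hpS' hx₁ hy₁ hs₁ hp
        rcases le_or_gt y₁ Y with hgood | hbad
        · have hinv' : ∀ q x y, q ∈ S → 0 < x → 0 < y → x + y < (X - x₁) + (Y - y₁) →
              q = p + x • U τ j + y • V τ j → x ≤ X - x₁ := by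
            intro q x y hq hx hy hxy hqrep
            have e : q = A + (x₁ + x) • U τ j + (y₁ + y) • V τ j := by
              rw [hqrep, hp]; module
            have := hinvX q (x₁ + x) (y₁ + y) hq (by linarith) (by linarith) (by linarith) e
            linarith
          have IH := (ih j p B (X - x₁) (Y - y₁) hpS' hB hpB (by linarith) (by linarith)
            goodRep goodCard).1 hinv'
          have hfull := Reach_step τ S hadj IH
          apply Reach_mono τ S hfull
          rw [cV_def τ j (X - x₁) (Y - y₁), cV_def τ j X Y]
          nlinarith [mul_le_mul_of_nonneg_left h1 hx₁.le]
        · exact badY hbad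
      · -- component 2 : inv-y → cU
        intro hinvY
        have hy₁Y : y₁ ≤ Y := hinvY p x₁ y₁ hpS' hx₁ hy₁ hs₁ hp
        rcases le_or_gt x₁ X with hgood | hbad
        · have hinv' : ∀ q x y, q ∈ S → 0 < x → 0 < y → x + y < (X - x₁) + (Y - y₁) →
              q = p + x • U τ j + y • V τ j → y ≤ Y - y₁ := by
            intro q x y hq hx hy hxy hqrep
            have e : q = A + (x₁ + x) • U τ j + (y₁ + y) • V τ j := by
              rw [hqrep, hp]; module
            have := hinvY q (x₁ + x) (y₁ + y) hq (by linarith) (by linarith) (by linarith) e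
            linarith
          have IH := (ih j p B (X - x₁) (Y - y₁) hpS' hB hpB (by linarith) (by linarith)
            goodRep goodCard).2.1 hinv'
          have hfull := Reach_step τ S hadj IH
          apply Reach_mono τ S hfull
          rw [cU_def τ j (X - x₁) (Y - y₁), cU_def τ j X Y]
          nlinarith [mul_le_mul_of_nonneg_left h2 hy₁.le]
        · exact badX hbad
      · -- component 3 : disjunction
        rcases le_or_gt y₁ Y with hgoodY | hbadY
        · rcases le_or_gt x₁ X with hgoodX | hbadX
          · rcases (ih j p B (X - x₁) (Y - y₁) hpS' hB hpB (by linarith) (by linarith)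
              goodRep goodCard).2.2 with h | h
            · left
              have hfull := Reach_step τ S hadj h
              apply Reach_mono τ S hfull
              rw [cU_def τ j (X - x₁) (Y - y₁), cU_def τ j X Y]
              nlinarith [mul_le_mul_of_nonneg_left h2 hy₁.le]
            · right
              have hfull := Reach_step τ S hadj h
              apply Reach_mono τ S hfull
              rw [cV_def τ j (X - x₁) (Y - y₁), cV_def τ j X Y]
              nlinarith [mul_le_mul_of_nonneg_left h1 hx₁.le]
          · exact Or.inl (badX hbadX)
        · exact Or.inr (badY hbadY)

end TDP

/-- If `t` lies in a positive cone of `s`, then there is a path from `s` to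
`t` in the `TD_{θ₁,θ₂}`-Delaunay graph of `S` of length at most `‖s − t‖ / sin(θ₁/2)`;
in particular `d_G(s,t) ≤ ‖s − t‖ / sin(θ₁/2)`. -/
theorem positive_cone_routing_bound
    (θ : Fin 3 → ℝ) (hθ0 : 0 < θ 0) (hθ01 : θ 0 ≤ θ 1) (hθ12 : θ 1 ≤ θ 2)
    (hsum : θ 0 + θ 1 + θ 2 = Real.pi)
    (τ : Fin 3 → Pt) (hncol : ¬ Collinear ℝ (Set.range τ))
    (hangle : ∀ j : Fin 3, EuclideanGeometry.angle (τ (j + 1)) (τ j) (τ (j - 1)) = θ j)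
    (S : Finset Pt) (hgp : GenPos τ ↑S)
    (s t : Pt) (hs : s ∈ S) (ht : t ∈ S) (hst : s ≠ t)
    (i : Fin 3) (hcone : t ∈ posCone τ s i) :
    (∃ P : List Pt, IsPathFrom (TDAdj (Tri τ) ↑S) s t P ∧
        pathLength P ≤ ‖s - t‖ / Real.sin (θ 0 / 2)) ∧
      dG (TDAdj (Tri τ) ↑S) s t ≤ ‖s - t‖ / Real.sin (θ 0 / 2) := by
  obtain ⟨a, b, ha, hb, hrep⟩ := hcone
  have hrep' : t = s + a • TDP.U τ i + b • TDP.V τ i := hrep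
  have hmain := (TDP.main τ S hncol
    (((↑S : Set Pt) ∩ interior (TDP.Tset τ i s (a + b))).ncard)
    i s t a b hs ht hst ha hb hrep' (le_refl _)).2.2
  have hnorm : ‖a • TDP.U τ i + b • TDP.V τ i‖ = ‖s - t‖ := by
    have e : s - t = -(a • TDP.U τ i + b • TDP.V τ i) := by rw [hrep']; abel
    rw [e, norm_neg]
  have hbound : ∀ L, TDP.Reach τ S s t L → L ≤ ‖s - t‖ / Real.sin (θ 0 / 2) → 
      (∃ P : List Pt, IsPathFrom (TDAdj (Tri τ) ↑S) s t P ∧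
        pathLength P ≤ ‖s - t‖ / Real.sin (θ 0 / 2)) := by
    rintro L ⟨P, h1, h2⟩ hL
    exact ⟨P, h1, h2.trans hL⟩
  have hPex : ∃ P : List Pt, IsPathFrom (TDAdj (Tri τ) ↑S) s t P ∧
      pathLength P ≤ ‖s - t‖ / Real.sin (θ 0 / 2) := by
    rcases hmain with h | h
    · apply hbound _ h
      rw [TDP.cU_def, ← hnorm]
      exact TDP.cornerU_bound τ θ hncol hθ0 hθ01 hθ12 hangle i ha hb
    · apply hbound _ h
      rw [TDP.cV_def, ← hnorm]
      exact TDP.cornerV_bound τ θ hncol hθ0 hθ01 hθ12 hangle i ha hb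
  refine ⟨hPex, ?_⟩
  obtain ⟨P, h1, h2⟩ := hPex
  have hmem : pathLength P ∈
      { L : ℝ | ∃ P' : List Pt, IsPathFrom (TDAdj (Tri τ) ↑S) s t P' ∧ pathLength P' = L } :=
    ⟨P, h1, rfl⟩
  have hbdd : BddBelow { L : ℝ | ∃ P' : List Pt,
      IsPathFrom (TDAdj (Tri τ) ↑S) s t P' ∧ pathLength P' = L } := by
    refine ⟨0, ?_⟩
    rintro L ⟨P', _, rfl⟩
    exact pathLength_nonneg P'
  calc dG (TDAdj (Tri τ) ↑S) s t ≤ pathLength P := csInf_le hbdd hmem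
    _ ≤ _ := h2
end
end

section
/- For every α ∈ [0, π/3], (2/√3)·( sin(π/3 − α) + sin α + min( sin α + sin(α + π/3) , sin(π/3 − α) + sin(α + π/3) ) ) ≤ 5/√3, with equality when α = π/6. Consequently, C(π/3, π/3) = 5/√3. -/
noncomputable section

open Real in
lemma Ceq_theta (i : Fin 3) : (![π / 3, π / 3, π / 3] : Fin 3 → ℝ) i = π / 3 := by
  fin_cases i <;> rfl

open Real in
lemma Ceq_key (α : ℝ) (hα : α ∈ Set.Icc (0 : ℝ) (π / 3)) :
    Real.sin (π / 3 - α) + Real.sin α +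
      min (Real.sin α + Real.sin (α + π / 3))
          (Real.sin (π / 3 - α) + Real.sin (α + π / 3)) ≤ 5 / 2 := by
  have h1 : Real.sin (π / 3 - α) + Real.sin α = Real.cos (α - π / 6) := by
    rw [Real.sin_sub, Real.cos_sub, Real.sin_pi_div_three, Real.cos_pi_div_three,
      Real.sin_pi_div_six, Real.cos_pi_div_six]; ring
  have h2 : Real.sin (α + π / 3) = Real.cos (α - π / 6) := by
    rw [Real.sin_add, Real.cos_sub, Real.sin_pi_div_three, Real.cos_pi_div_three,
      Real.sin_pi_div_six, Real.cos_pi_div_six]; ring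
  have hc : Real.cos (α - π / 6) ≤ 1 := Real.cos_le_one _
  rcases le_total (Real.sin α) (Real.sin (π / 3 - α)) with h | h
  · have := min_le_left (Real.sin α + Real.sin (α + π / 3))
      (Real.sin (π / 3 - α) + Real.sin (α + π / 3))
    linarith
  · have := min_le_right (Real.sin α + Real.sin (α + π / 3))
      (Real.sin (π / 3 - α) + Real.sin (α + π / 3))
    linarith

open Real in
lemma Ceq_mid :
    Real.sin (π / 3 - π / 6) + Real.sin (π / 6) +
      min (Real.sin (π / 6) + Real.sin (π / 6 + π / 3))
          (Real.sin (π / 3 - π / 6) + Real.sin (π / 6 + π / 3)) = 5 / 2 := by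
  rw [show π / 3 - π / 6 = π / 6 by ring, show π / 6 + π / 3 = π / 2 by ring,
    Real.sin_pi_div_six, Real.sin_pi_div_two]
  norm_num

open Real in
/-- For all `α ∈ [0, π/3]` the equilateral-triangle routing expression is at
most `5/√3`, with equality at `α = π/6`; consequently `C(π/3, π/3) = 5/√3`. -/
theorem C_equilateral_eq :
    (∀ α ∈ Set.Icc (0 : ℝ) (π / 3),
      (2 / Real.sqrt 3) * (Real.sin (π / 3 - α) + Real.sin α +
        min (Real.sin α + Real.sin (α + π / 3))
            (Real.sin (π / 3 - α) + Real.sin (α + π / 3))) ≤ 5 / Real.sqrt 3) ∧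
    ((2 / Real.sqrt 3) * (Real.sin (π / 3 - π / 6) + Real.sin (π / 6) +
        min (Real.sin (π / 6) + Real.sin (π / 6 + π / 3))
            (Real.sin (π / 3 - π / 6) + Real.sin (π / 6 + π / 3))) = 5 / Real.sqrt 3) ∧
    Cval ![π / 3, π / 3, π / 3] = 5 / Real.sqrt 3 := by
  have hs3 : (0 : ℝ) < Real.sqrt 3 := Real.sqrt_pos.mpr (by norm_num)
  have hq : (2 / Real.sqrt 3) * (5 / 2) = 5 / Real.sqrt 3 := by
    field_simp
  have hb : ∀ α ∈ Set.Icc (0 : ℝ) (π / 3),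
      (2 / Real.sqrt 3) * (Real.sin (π / 3 - α) + Real.sin α +
        min (Real.sin α + Real.sin (α + π / 3))
            (Real.sin (π / 3 - α) + Real.sin (α + π / 3))) ≤ 5 / Real.sqrt 3 := by
    intro α hα
    calc (2 / Real.sqrt 3) * (Real.sin (π / 3 - α) + Real.sin α +
        min (Real.sin α + Real.sin (α + π / 3))
            (Real.sin (π / 3 - α) + Real.sin (α + π / 3)))
        ≤ (2 / Real.sqrt 3) * (5 / 2) :=
          mul_le_mul_of_nonneg_left (Ceq_key α hα) (by positivity)
      _ = 5 / Real.sqrt 3 := hq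
  have heq : (2 / Real.sqrt 3) * (Real.sin (π / 3 - π / 6) + Real.sin (π / 6) +
        min (Real.sin (π / 6) + Real.sin (π / 6 + π / 3))
            (Real.sin (π / 3 - π / 6) + Real.sin (π / 6 + π / 3))) = 5 / Real.sqrt 3 := by
    rw [Ceq_mid, hq]
  refine ⟨hb, heq, ?_⟩
  have hCexpr : ∀ (j : Fin 3) (α : ℝ), Cexpr ![π / 3, π / 3, π / 3] j α =
      (2 / Real.sqrt 3) * (Real.sin (π / 3 - α) + Real.sin α +
        min (Real.sin α + Real.sin (α + π / 3))
            (Real.sin (π / 3 - α) + Real.sin (α + π / 3))) := by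
    intro j α
    have hd : ∀ x : ℝ, x / Real.sin (π / 3) = (2 / Real.sqrt 3) * x := by
      intro x
      rw [Real.sin_pi_div_three]
      field_simp
    have hmin : (2 / Real.sqrt 3) * min (Real.sin α + Real.sin (α + π / 3))
        (Real.sin (π / 3 - α) + Real.sin (α + π / 3)) =
        min ((2 / Real.sqrt 3) * (Real.sin α + Real.sin (α + π / 3)))
            ((2 / Real.sqrt 3) * (Real.sin (π / 3 - α) + Real.sin (α + π / 3))) :=
      (monotone_mul_left_of_nonneg (by positivity)).map_min
    simp only [Cexpr, Ceq_theta, hd]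
    rw [mul_add, mul_add, hmin, mul_add, mul_add]
  have hmemv : (5 : ℝ) / Real.sqrt 3 ∈
      { x : ℝ | ∃ j : Fin 3, ∃ α : ℝ,
        α ∈ Set.Icc 0 ((![π / 3, π / 3, π / 3] : Fin 3 → ℝ) j) ∧
        x = Cexpr ![π / 3, π / 3, π / 3] j α } := by
    refine ⟨0, π / 6, ?_, ?_⟩
    · rw [Ceq_theta]
      constructor
      · positivity
      · linarith [Real.pi_pos]
    · rw [hCexpr, heq]
  apply le_antisymm
  · apply csSup_le ⟨_, hmemv⟩
    rintro x ⟨j, α, hα, rfl⟩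
    rw [Ceq_theta] at hα
    rw [hCexpr]
    exact hb α hα
  · apply le_csSup _ hmemv
    refine ⟨5 / Real.sqrt 3, ?_⟩
    rintro x ⟨j, α, hα, rfl⟩
    rw [Ceq_theta] at hα
    rw [hCexpr]
    exact hb α hα
end
end

section
/- Let S ⊆ ℝ² be finite and in general position, let u ∈ S and i ∈ {1,2,3}. If some point of S other than u lies in the positive cone C_{u,i}, then u is adjacent in the TD_{θ₁,θ₂}-Delaunay graph of S to at least one point v ∈ S with v ∈ C_{u,i} and v ≠ u. -/
noncomputable section

namespace TDAux

theorem fin3_sub (i : Fin 3) : i - 1 = i + 2 := by fin_cases i <;> decide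

/-- The affine map `x ↦ r • x + w`. -/
def scaleAdd (r : ℝ) (w : Pt) : Pt →ᵃ[ℝ] Pt where
  toFun x := r • x + w
  linear := r • LinearMap.id
  map_vadd' p v := by
    simp only [vadd_eq_add, LinearMap.smul_apply, LinearMap.id_coe, id_eq, smul_add]
    abel

@[simp] theorem scaleAdd_apply (r : ℝ) (w x : Pt) : scaleAdd r w x = r • x + w := rfl

theorem scaleAdd_injective {r : ℝ} (hr : r ≠ 0) (w : Pt) :
    Function.Injective (scaleAdd r w) := by
  intro x y hxy
  simp only [scaleAdd_apply, add_left_inj] at hxy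
  exact smul_right_injective Pt hr hxy

/-- Affine basis from `u, u+a, u+b`. -/
def triBasis (u a b : Pt) (h : AffineIndependent ℝ ![u, u + a, u + b]) :
    AffineBasis (Fin 3) ℝ Pt :=
  ⟨![u, u + a, u + b], h, by
    rw [h.affineSpan_eq_top_iff_card_eq_finrank_add_one]
    simp [finrank_euclideanSpace_fin]⟩

@[simp] theorem coe_triBasis (u a b : Pt) (h) : ⇑(triBasis u a b h) = ![u, u + a, u + b] := rfl

theorem triBasis_coord (u a b : Pt) (h) (c1 c2 : ℝ) :
    (triBasis u a b h).coord 0 (u + c1 • a + c2 • b) = 1 - c1 - c2 ∧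
    (triBasis u a b h).coord 1 (u + c1 • a + c2 • b) = c1 ∧
    (triBasis u a b h).coord 2 (u + c1 • a + c2 • b) = c2 := by
  set B := triBasis u a b h with hB
  have hw : Finset.univ.sum (![1 - c1 - c2, c1, c2] : Fin 3 → ℝ) = 1 := by
    simp [Fin.sum_univ_three]; ring
  have hx : Finset.univ.affineCombination ℝ (⇑B) ![1 - c1 - c2, c1, c2]
      = u + c1 • a + c2 • b := by
    rw [Finset.univ.affineCombination_eq_linear_combination _ _ hw]
    rw [Fin.sum_univ_three]
    simp only [hB, coe_triBasis, Matrix.cons_val_zero, Matrix.cons_val_one, Matrix.head_cons,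
      Matrix.cons_val_two, Matrix.tail_cons]
    module
  refine ⟨?_, ?_, ?_⟩ <;>
  · rw [← hx, B.coord_apply_combination_of_mem (Finset.mem_univ _) hw]
    simp

theorem triBasis_rep (u a b : Pt) (h) (x : Pt) :
    x = u + ((triBasis u a b h).coord 1 x) • a + ((triBasis u a b h).coord 2 x) • b := by
  set B := triBasis u a b h with hB
  have hs := B.sum_coord_apply_eq_one x
  have hx := B.affineCombination_coord_eq_self x
  rw [Finset.univ.affineCombination_eq_linear_combination _ _ hs] at hx
  rw [Fin.sum_univ_three] at hx
  rw [Fin.sum_univ_three] at hs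
  have h0 : B.coord 0 x = 1 - B.coord 1 x - B.coord 2 x := by linarith
  rw [h0] at hx
  have hBc : ⇑B = ![u, u + a, u + b] := rfl
  simp only [hBc, Matrix.cons_val_zero, Matrix.cons_val_one, Matrix.head_cons,
    Matrix.cons_val_two, Matrix.tail_cons] at hx
  conv_lhs => rw [← hx]
  module

theorem mem_tri (u a b : Pt) {s t : ℝ} (hs : 0 ≤ s) (ht : 0 ≤ t) (hst : s + t ≤ 1) :
    u + s • a + t • b ∈ convexHull ℝ (Set.range ![u, u + a, u + b]) := by
  have hw : Finset.univ.sum (![1 - s - t, s, t] : Fin 3 → ℝ) = 1 := by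
    simp [Fin.sum_univ_three]; ring
  have hx : Finset.univ.affineCombination ℝ ![u, u + a, u + b] ![1 - s - t, s, t]
      = u + s • a + t • b := by
    rw [Finset.univ.affineCombination_eq_linear_combination _ _ hw]
    rw [Fin.sum_univ_three]
    simp only [Matrix.cons_val_zero, Matrix.cons_val_one, Matrix.head_cons,
      Matrix.cons_val_two, Matrix.tail_cons]
    module
  rw [← hx]
  refine affineCombination_mem_convexHull ?_ hw
  intro j _
  fin_cases j <;> simp <;> linarith

theorem range_eq_triple (τ : Fin 3 → Pt) (i : Fin 3) :
    Set.range τ = {τ i, τ (i + 1), τ (i + 2)} := by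
  have huniv : ({i, i + 1, i + 2} : Set (Fin 3)) = Set.univ := by
    ext j
    fin_cases i <;> fin_cases j <;> simp <;> decide
  rw [← Set.image_univ, ← huniv]
  simp [Set.image_insert_eq]

theorem affineIndependent_shift (τ : Fin 3 → Pt) (hncol : ¬ Collinear ℝ (Set.range τ))
    (i : Fin 3) : AffineIndependent ℝ ![τ i, τ (i + 1), τ (i + 2)] := by
  rw [affineIndependent_iff_not_collinear_set]
  rwa [range_eq_triple τ i] at hncol

theorem affineIndependent_scaled (τ : Fin 3 → Pt) (hncol : ¬ Collinear ℝ (Set.range τ))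
    (i : Fin 3) (u : Pt) {r : ℝ} (hr : r ≠ 0) :
    AffineIndependent ℝ ![u, u + r • (τ (i+1) - τ i), u + r • (τ (i+2) - τ i)] := by
  have h := (affineIndependent_shift τ hncol i).map' (scaleAdd r (u - r • τ i))
      (scaleAdd_injective hr _)
  convert h using 1
  funext j
  fin_cases j <;>
    simp [Function.comp, smul_sub] <;> abel

theorem scaledTranslate_tri (τ : Fin 3 → Pt) (i : Fin 3) (u : Pt) (r : ℝ) :
    scaledTranslate (Tri τ) r (u - r • τ i)
      = convexHull ℝ (Set.range ![u, u + r • (τ (i+1) - τ i), u + r • (τ (i+2) - τ i)]) := by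
  have h1 : scaledTranslate (Tri τ) r (u - r • τ i)
      = (scaleAdd r (u - r • τ i)) '' (convexHull ℝ (Set.range τ)) := rfl
  rw [h1, AffineMap.image_convexHull]
  congr 1
  rw [range_eq_triple τ i]
  rw [Set.image_insert_eq, Set.image_insert_eq, Set.image_singleton]
  have e0 : scaleAdd r (u - r • τ i) (τ i) = u := by rw [scaleAdd_apply]; abel
  have e1 : scaleAdd r (u - r • τ i) (τ (i+1)) = u + r • (τ (i+1) - τ i) := by
    simp [smul_sub]; abel
  have e2 : scaleAdd r (u - r • τ i) (τ (i+2)) = u + r • (τ (i+2) - τ i) := by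
    simp [smul_sub]; abel
  rw [e0, e1, e2]
  ext x
  simp only [Set.mem_insert_iff, Set.mem_singleton_iff, Set.mem_range]
  constructor
  · rintro (rfl | rfl | rfl)
    exacts [⟨0, rfl⟩, ⟨1, rfl⟩, ⟨2, rfl⟩]
  · rintro ⟨j, rfl⟩
    fin_cases j <;> simp

end TDAux

open TDAux

/-- If the positive cone `C_{u,i}` contains a point of `S` other than `u`,
then `u` is adjacent in the `TD_{θ₁,θ₂}`-Delaunay graph of `S` to some point of `S` in
that cone. -/
theorem neighbour_in_nonempty_positive_cone
    (θ : Fin 3 → ℝ) (hθ0 : 0 < θ 0) (hθ01 : θ 0 ≤ θ 1) (hθ12 : θ 1 ≤ θ 2)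
    (hsum : θ 0 + θ 1 + θ 2 = Real.pi)
    (τ : Fin 3 → Pt) (hncol : ¬ Collinear ℝ (Set.range τ))
    (hangle : ∀ j : Fin 3, EuclideanGeometry.angle (τ (j + 1)) (τ j) (τ (j - 1)) = θ j)
    (S : Finset Pt) (hgp : GenPos τ ↑S)
    (u : Pt) (hu : u ∈ S) (i : Fin 3)
    (hne : ∃ x ∈ S, x ≠ u ∧ x ∈ posCone τ u i) :
    ∃ v ∈ S, v ≠ u ∧ v ∈ posCone τ u i ∧ TDAdj (Tri τ) ↑S u v := by

  classical
  have hi2 : i - 1 = i + 2 := fin3_sub i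
  have h1 : AffineIndependent ℝ ![u, u + (τ (i+1) - τ i), u + (τ (i+2) - τ i)] := by
    have h := affineIndependent_scaled τ hncol i u (one_ne_zero (α := ℝ))
    simpa using h
  set B1 := triBasis u (τ (i+1) - τ i) (τ (i+2) - τ i) h1 with hB1
  set F := S.filter (fun x => x ≠ u ∧ x ∈ posCone τ u i) with hF
  have hFne : F.Nonempty := by
    obtain ⟨x, hxS, hxne, hxc⟩ := hne
    exact ⟨x, Finset.mem_filter.mpr ⟨hxS, hxne, hxc⟩⟩
  obtain ⟨v, hvF, hvmin⟩ := F.exists_min_image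
    (fun x => B1.coord 1 x + B1.coord 2 x) hFne
  obtain ⟨hvS, hvne, hvcone⟩ := Finset.mem_filter.mp hvF
  obtain ⟨s, t, hs, ht, hveq⟩ := hvcone
  rw [hi2] at hveq
  have hcv := triBasis_coord u (τ (i+1) - τ i) (τ (i+2) - τ i) h1 s t
  rw [← hB1] at hcv
  have hv1 : B1.coord 1 v = s := by rw [hveq]; exact hcv.2.1
  have hv2 : B1.coord 2 v = t := by rw [hveq]; exact hcv.2.2
  set r := s + t with hr
  have hrpos : 0 < r := by
    rcases lt_or_eq_of_le (by positivity : (0:ℝ) ≤ s + t) with h | h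
    · exact h
    · exfalso; apply hvne
      have hs0 : s = 0 := by linarith
      have ht0 : t = 0 := by linarith
      rw [hveq, hs0, ht0]; simp
  have hrne : r ≠ 0 := ne_of_gt hrpos
  have h2 := affineIndependent_scaled τ hncol i u hrne
  set B2 := triBasis u (r • (τ (i+1) - τ i)) (r • (τ (i+2) - τ i)) h2 with hB2
  set T := convexHull ℝ
      (Set.range ![u, u + r • (τ (i+1) - τ i), u + r • (τ (i+2) - τ i)]) with hT
  have hTr : scaledTranslate (Tri τ) r (u - r • τ i) = T := scaledTranslate_tri τ i u r
  have hclosed : IsClosed T := ((Set.finite_range _).isCompact_convexHull ℝ).isClosed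
  have hBc : ⇑B2 = ![u, u + r • (τ (i+1) - τ i), u + r • (τ (i+2) - τ i)] := rfl
  have hint : interior T = {x | ∀ j, 0 < B2.coord j x} := by
    rw [hT, ← hBc, B2.interior_convexHull]
  have hrew : ∀ c1 c2 : ℝ, u + c1 • (τ (i+1) - τ i) + c2 • (τ (i+2) - τ i)
      = u + (c1/r) • (r • (τ (i+1) - τ i)) + (c2/r) • (r • (τ (i+2) - τ i)) := by
    intro c1 c2
    rw [smul_smul, smul_smul, div_mul_cancel₀ _ hrne, div_mul_cancel₀ _ hrne]
  have hcoord2 : ∀ c1 c2 : ℝ,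
      B2.coord 0 (u + c1 • (τ (i+1) - τ i) + c2 • (τ (i+2) - τ i)) = 1 - c1/r - c2/r ∧
      B2.coord 1 (u + c1 • (τ (i+1) - τ i) + c2 • (τ (i+2) - τ i)) = c1/r ∧
      B2.coord 2 (u + c1 • (τ (i+1) - τ i) + c2 • (τ (i+2) - τ i)) = c2/r := by
    intro c1 c2
    have h := triBasis_coord u (r • (τ (i+1) - τ i)) (r • (τ (i+2) - τ i)) h2 (c1/r) (c2/r)
    rw [← hB2, ← hrew] at h
    exact h
  have huexp : u = u + (0:ℝ) • (τ (i+1) - τ i) + (0:ℝ) • (τ (i+2) - τ i) := by simp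
  have hu_not : u ∉ interior T := by
    rw [hint]
    intro hcon
    have h10 : B2.coord 1 u = 0 := by
      have h := (hcoord2 0 0).2.1
      rw [← huexp] at h
      simpa using h
    have := hcon 1
    rw [h10] at this
    exact lt_irrefl 0 this
  have hu_in : u ∈ T := by
    rw [hT]
    exact subset_convexHull ℝ _ ⟨0, rfl⟩
  have hv_in : v ∈ T := by
    have h := mem_tri u (r • (τ (i+1) - τ i)) (r • (τ (i+2) - τ i))
      (div_nonneg hs (le_of_lt hrpos)) (div_nonneg ht (le_of_lt hrpos))
      (le_of_eq (by rw [← add_div, ← hr, div_self hrne]))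
    rw [hT]
    rw [hveq, hrew s t]
    exact h
  have hv_not : v ∉ interior T := by
    rw [hint]
    intro hcon
    have h0 : B2.coord 0 v = 0 := by
      have h := (hcoord2 s t).1
      rw [← hveq] at h
      rw [h]
      field_simp
      rw [hr]
      ring
    have := hcon 0
    rw [h0] at this
    exact lt_irrefl 0 this
  have hnone : ∀ x ∈ (S : Set Pt), x ∉ interior T := by
    intro x hxS hxint
    rw [hint] at hxint
    have hrep := triBasis_rep u (τ (i+1) - τ i) (τ (i+2) - τ i) h1 x
    rw [← hB1] at hrep
    set c1 := B1.coord 1 x with hc1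
    set c2 := B1.coord 2 x with hc2
    have hx1 : B2.coord 1 x = c1/r := by
      have h := (hcoord2 c1 c2).2.1
      rw [← hrep] at h
      exact h
    have hx2 : B2.coord 2 x = c2/r := by
      have h := (hcoord2 c1 c2).2.2
      rw [← hrep] at h
      exact h
    have hx0 : B2.coord 0 x = 1 - c1/r - c2/r := by
      have h := (hcoord2 c1 c2).1
      rw [← hrep] at h
      exact h
    have hc1pos : 0 < c1 := by
      have h := hxint 1
      rw [hx1] at h
      have := mul_pos h hrpos
      rwa [div_mul_cancel₀ _ hrne] at this
    have hc2pos : 0 < c2 := by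
      have h := hxint 2
      rw [hx2] at h
      have := mul_pos h hrpos
      rwa [div_mul_cancel₀ _ hrne] at this
    have hlt : c1 + c2 < r := by
      have h := hxint 0
      rw [hx0, show (1:ℝ) - c1/r - c2/r = 1 - (c1+c2)/r by ring] at h
      exact (div_lt_one hrpos).mp (by linarith)
    have hxne : x ≠ u := by
      intro hxu
      have h10 : B1.coord 1 u = 0 := by
        have h := (triBasis_coord u (τ (i+1) - τ i) (τ (i+2) - τ i) h1 0 0).2.1
        rw [← hB1, ← huexp] at h
        simpa using h
      rw [hc1, hxu, h10] at hc1pos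
      exact lt_irrefl 0 hc1pos
    have hxcone : x ∈ posCone τ u i := by
      refine ⟨c1, c2, le_of_lt hc1pos, le_of_lt hc2pos, ?_⟩
      rw [hi2]
      exact hrep
    have hmin := hvmin x (Finset.mem_filter.mpr ⟨hxS, hxne, hxcone⟩)
    simp only [hv1, hv2] at hmin
    linarith
  refine ⟨v, hvS, hvne, ⟨s, t, hs, ht, by rw [hi2]; exact hveq⟩,
    ?_, ?_, Ne.symm hvne, r, hrpos, u - r • τ i, ?_, ?_, ?_⟩
  · exact hu
  · exact hvS
  · rw [hTr, hclosed.frontier_eq]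
    exact ⟨hu_in, hu_not⟩
  · rw [hTr, hclosed.frontier_eq]
    exact ⟨hv_in, hv_not⟩
  · rw [hTr]
    exact hnone
end
end

section
/- Let u, v ∈ ℝ² be distinct points. Then the set R := {r > 0 : there exist w ∈ ℝ² such that u and v both lie on the topological boundary of r·Δ + w} is nonempty and attains a minimum r*. Moreover, for every w ∈ ℝ² such that u and v lie on the boundary of T := r*·Δ + w, at least one of u, v is a corner of T, i.e. equals r*·τᵢ + w for some i ∈ {1,2,3}. -/
noncomputable section

open Set Metric Pointwise Filter Topology Bornology

namespace SmallestHomothetAux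

lemma mem_iff_gauge_le_one {E : Set Pt} (hc : Convex ℝ E) (hcl : IsClosed E)
    (h0 : E ∈ 𝓝 (0:Pt)) {x : Pt} : x ∈ E ↔ gauge E x ≤ 1 := by
  rw [gauge_le_one_iff_mem_closure hc h0, hcl.closure_eq]

/-- Boundary representation, version with `0 ∈ interior E`. -/
lemma exists_frontier_rep₀ {E : Set Pt} (hc : Convex ℝ E) (hcomp : IsCompact E)
    (h0 : 0 ∈ interior E) {x : Pt} (hx0 : x ≠ 0) {a : Pt} (ha : a ∈ E) (hax : a + x ∈ E) :
    ∃ p ∈ frontier E, p + x ∈ frontier E := by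
  have h0n : E ∈ 𝓝 (0:Pt) := mem_interior_iff_mem_nhds.mp h0
  have habs : Absorbent ℝ E := absorbent_nhds_zero h0n
  have hvb : Bornology.IsVonNBounded ℝ E :=
    NormedSpace.isVonNBounded_of_isBounded _ hcomp.isBounded
  have hgpos : ∀ y : Pt, y ≠ 0 → 0 < gauge E y := fun y hy => (gauge_pos habs hvb).mpr hy
  have hgcont : Continuous (gauge E) := continuous_gauge hc h0n
  have hfr : ∀ y : Pt, y ∈ frontier E ↔ gauge E y = 1 :=
    fun y => (gauge_eq_one_iff_mem_frontier hc h0n).symm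
  have hxnorm : (0:ℝ) < ‖x‖ := norm_pos_iff.mpr hx0
  -- the sliding construction: a boundary point `p₁` with `p₁ + x ∈ E`.
  set S : Set ℝ := {t : ℝ | a + t • x ∈ E} with hSdef
  have hS0 : (0:ℝ) ∈ S := by simpa [hSdef] using ha
  have hS1 : (1:ℝ) ∈ S := by simpa [hSdef] using hax
  have hSconv : Convex ℝ S := by
    intro t1 h1 t2 h2 θ1 θ2 hθ1 hθ2 hθ
    have hmem : θ1 • (a + t1 • x) + θ2 • (a + t2 • x) ∈ E := hc h1 h2 hθ1 hθ2 hθ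
    have heq : θ1 • (a + t1 • x) + θ2 • (a + t2 • x) = a + (θ1 * t1 + θ2 * t2) • x := by
      rw [smul_add, smul_add, smul_smul, smul_smul]
      calc θ1 • a + (θ1 * t1) • x + (θ2 • a + (θ2 * t2) • x)
          = (θ1 + θ2) • a + ((θ1 * t1) • x + (θ2 * t2) • x) := by
            rw [add_smul]; abel
        _ = a + ((θ1 * t1 + θ2 * t2) • x) := by rw [hθ, one_smul, add_smul]
    show a + (θ1 * t1 + θ2 * t2) • x ∈ E
    rw [← heq]; exact hmem
  have hScl : IsClosed S := by
    have hcont : Continuous fun t : ℝ => a + t • x :=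
      continuous_const.add (continuous_id.smul continuous_const)
    exact hcomp.isClosed.preimage hcont
  have hSbdd : BddBelow S := by
    obtain ⟨M, hM⟩ := hcomp.isBounded.exists_norm_le
    refine ⟨-((M + ‖a‖) / ‖x‖), fun t ht => ?_⟩
    have h1 : ‖t • x‖ ≤ M + ‖a‖ := by
      have hMt := hM _ ht
      calc ‖t • x‖ = ‖(a + t • x) - a‖ := by congr 1; abel
        _ ≤ ‖a + t • x‖ + ‖a‖ := norm_sub_le _ _
        _ ≤ M + ‖a‖ := by linarith
    have h2 : |t| ≤ (M + ‖a‖) / ‖x‖ := by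
      rw [le_div_iff₀ hxnorm]
      simpa [norm_smul, Real.norm_eq_abs] using h1
    have h3 := neg_abs_le t
    linarith
  set tlo : ℝ := sInf S with ht
  have htm : tlo ∈ S := hScl.csInf_mem ⟨0, hS0⟩ hSbdd
  set p₁ : Pt := a + tlo • x with hp₁def
  have hp₁E : p₁ ∈ E := htm
  have hp₁fr : p₁ ∈ frontier E := by
    rw [hcomp.isClosed.frontier_eq]
    refine ⟨hp₁E, fun hn => ?_⟩
    obtain ⟨ε, hε, hball⟩ := Metric.mem_nhds_iff.mp (isOpen_interior.mem_nhds hn)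
    set δ : ℝ := ε / (2 * ‖x‖) with hδ
    have hδpos : 0 < δ := by positivity
    have hmem' : (tlo - δ) ∈ S := by
      show a + (tlo - δ) • x ∈ E
      refine interior_subset (hball ?_)
      rw [mem_ball, dist_eq_norm]
      have heq2 : a + (tlo - δ) • x - p₁ = (-δ) • x := by
        rw [hp₁def, sub_smul]; module
      rw [heq2, norm_smul]
      simp only [norm_neg, Real.norm_eq_abs, abs_neg, abs_of_pos hδpos]
      rw [hδ, div_mul_eq_mul_div, div_lt_iff₀ (by positivity : (0:ℝ) < 2 * ‖x‖)]
      nlinarith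
    have hle : tlo ≤ tlo - δ := csInf_le hSbdd hmem'
    linarith
  have hp₁x : p₁ + x ∈ E := by
    have htle : tlo ≤ 0 := csInf_le hSbdd hS0
    have hmem : tlo + 1 ∈ S := by
      have : Set.Icc tlo 1 ⊆ S := hSconv.ordConnected.out htm hS1
      exact this ⟨by linarith, by linarith⟩
    show p₁ + x ∈ E
    have heq3 : p₁ + x = a + (tlo + 1) • x := by rw [hp₁def, add_smul, one_smul]; abel
    rw [heq3]; exact hmem
  -- the support construction: a boundary point `q₂` with `q₂ + x ∉ E`.
  obtain ⟨q₂, hq₂E, hq₂max⟩ :=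
    hcomp.exists_isMaxOn ⟨a, ha⟩ ((continuous_const.inner continuous_id).continuousOn :
      ContinuousOn (fun y : Pt => (inner ℝ x y : ℝ)) E)
  have hq₂fr : q₂ ∈ frontier E := by
    rw [hcomp.isClosed.frontier_eq]
    refine ⟨hq₂E, fun hn => ?_⟩
    obtain ⟨ε, hε, hball⟩ := Metric.mem_nhds_iff.mp (isOpen_interior.mem_nhds hn)
    set δ : ℝ := ε / (2 * ‖x‖) with hδ
    have hδpos : 0 < δ := by positivity
    have hmem' : q₂ + δ • x ∈ E := by
      refine interior_subset (hball ?_)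
      rw [mem_ball, dist_eq_norm, add_sub_cancel_left, norm_smul,
        Real.norm_eq_abs, abs_of_pos hδpos, hδ, div_mul_eq_mul_div,
        div_lt_iff₀ (by positivity : (0:ℝ) < 2 * ‖x‖)]
      nlinarith
    have hle := hq₂max hmem'
    simp only [mem_setOf_eq, id_eq, inner_add_right, inner_smul_right, real_inner_self_eq_norm_sq] at hle
    nlinarith [mul_pos hδpos (pow_pos hxnorm 2)]
  have hq₂x : q₂ + x ∉ E := by
    intro hmem
    have hle := hq₂max hmem
    simp only [mem_setOf_eq, id_eq, inner_add_right, real_inner_self_eq_norm_sq] at hle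
    nlinarith [pow_pos hxnorm 2]
  -- the IVT on the sphere
  have hfr_ne : ∀ y ∈ frontier E, y ≠ 0 := by
    intro y hy h0y
    rw [hfr] at hy
    rw [h0y, gauge_zero] at hy
    norm_num at hy
  set F : Pt → Pt := fun e => (gauge E e)⁻¹ • e with hF
  set ψ : Pt → ℝ := fun e => gauge E (F e + x) with hψ
  have hFval : ∀ y ∈ frontier E, F (‖y‖⁻¹ • y) = y := by
    intro y hy
    have hy0 : y ≠ 0 := hfr_ne y hy
    have hny : ‖y‖ ≠ 0 := norm_ne_zero_iff.mpr hy0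
    have : gauge E (‖y‖⁻¹ • y) = ‖y‖⁻¹ * gauge E y :=
      gauge_smul_of_nonneg (inv_nonneg.mpr (norm_nonneg y)) y
    rw [hF]
    simp only
    rw [this, (hfr y).mp hy, mul_one, inv_inv, smul_smul, mul_inv_cancel₀ hny, one_smul]
  have hsph : ∀ y : Pt, y ≠ 0 → ‖y‖⁻¹ • y ∈ sphere (0:Pt) 1 := by
    intro y hy
    rw [mem_sphere_zero_iff_norm, norm_smul, Real.norm_eq_abs, abs_of_nonneg
      (inv_nonneg.mpr (norm_nonneg y)), inv_mul_cancel₀ (norm_ne_zero_iff.mpr hy)]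
  have hsph_ne : ∀ e ∈ sphere (0:Pt) 1, e ≠ 0 := by
    intro e he h
    rw [mem_sphere_zero_iff_norm, h] at he
    norm_num at he
  have hψcont : ContinuousOn ψ (sphere (0:Pt) 1) := by
    have hFcont : ContinuousOn F (sphere (0:Pt) 1) := by
      refine ContinuousOn.smul (f := fun e : Pt => (gauge E e)⁻¹) ?_ continuousOn_id
      exact (hgcont.continuousOn).inv₀ fun e he => (hgpos e (hsph_ne e he)).ne'
    exact hgcont.comp_continuousOn (hFcont.add continuousOn_const)
  have hconn : IsPreconnected (sphere (0:Pt) 1) := by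
    refine (isConnected_sphere ?_ 0 zero_le_one).isPreconnected
    have hfr2 : Module.finrank ℝ Pt = 2 := finrank_euclideanSpace_fin
    rw [← Module.finrank_eq_rank, hfr2]
    norm_num
  have hψ1 : ψ (‖p₁‖⁻¹ • p₁) ≤ 1 := by
    rw [hψ]; simp only
    rw [hFval p₁ hp₁fr]
    exact gauge_le_one_of_mem hp₁x
  have hψ2 : 1 ≤ ψ (‖q₂‖⁻¹ • q₂) := by
    rw [hψ]; simp only
    rw [hFval q₂ hq₂fr]
    by_contra h
    push_neg at h
    exact hq₂x ((mem_iff_gauge_le_one hc hcomp.isClosed h0n).mpr h.le)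
  have hivt := hconn.intermediate_value (hsph p₁ (hfr_ne p₁ hp₁fr))
    (hsph q₂ (hfr_ne q₂ hq₂fr)) hψcont
  obtain ⟨e, hesph, heψ⟩ := hivt ⟨hψ1, hψ2⟩
  have he0 : e ≠ 0 := hsph_ne e hesph
  have hgF : gauge E (F e) = 1 := by
    have h2 : gauge E ((gauge E e)⁻¹ • e) = (gauge E e)⁻¹ * gauge E e :=
      gauge_smul_of_nonneg (inv_nonneg.mpr (gauge_nonneg e)) e
    rw [hF]; simp only
    rw [h2, inv_mul_cancel₀ (hgpos e he0).ne']
  refine ⟨F e, (hfr _).mpr hgF, (hfr _).mpr ?_⟩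
  exact heψ

/-- Boundary representation for a compact convex set with nonempty interior. -/
lemma exists_frontier_rep {E : Set Pt} (hc : Convex ℝ E) (hcomp : IsCompact E)
    (hne : (interior E).Nonempty) {x : Pt} (hx0 : x ≠ 0) {a : Pt} (ha : a ∈ E) (hax : a + x ∈ E) :
    ∃ p ∈ frontier E, p + x ∈ frontier E := by
  obtain ⟨z, hz⟩ := hne
  set φ : Pt ≃ₜ Pt := Homeomorph.subRight z with hφ
  have hφeq : ∀ y : Pt, φ y = y - z := fun y => rfl
  set E' : Set Pt := φ '' E with hE'
  have hc' : Convex ℝ E' := by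
    have h1 := hc.translate (-z)
    have h2 : E' = (fun y => -z + y) '' E := by
      rw [hE']; apply Set.image_congr'
      intro y; rw [hφeq]; abel
    rw [h2]; exact h1
  have hcomp' : IsCompact E' := hcomp.image φ.continuous
  have h0' : (0:Pt) ∈ interior E' := by
    rw [hE', ← φ.image_interior]
    exact ⟨z, hz, by rw [hφeq, sub_self]⟩
  have ha' : φ a ∈ E' := ⟨a, ha, rfl⟩
  have hax' : φ a + x ∈ E' := by
    refine ⟨a + x, hax, ?_⟩
    rw [hφeq, hφeq]; abel
  obtain ⟨p', hp', hpx'⟩ := exists_frontier_rep₀ hc' hcomp' h0' hx0 ha' hax'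
  rw [hE', ← φ.image_frontier] at hp' hpx'
  obtain ⟨p, hp, hpp⟩ := hp'
  refine ⟨p, hp, ?_⟩
  obtain ⟨q, hq, hqq⟩ := hpx'
  have hq2 : q = p + x := by
    have h1 : q - z = p - z + x := by
      calc q - z = φ q := (hφeq q).symm
        _ = φ p + x := by rw [hqq, hpp]
        _ = p - z + x := by rw [hφeq]
    rw [sub_eq_iff_eq_add] at h1
    rw [h1]; abel
  rwa [← hq2]

lemma vertex_of_not_interior (τ : Fin 3 → Pt) {p q : Pt}
    (hp : p ∈ Tri τ) (hq : q ∈ Tri τ)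
    (h0K : 0 ∈ interior (Tri τ - Tri τ))
    (hqp : q - p ∉ interior (Tri τ - Tri τ)) :
    ∃ i : Fin 3, p = τ i ∨ q = τ i := by
  classical
  set Δ : Set Pt := Tri τ with hΔ
  have hΔconv : Convex ℝ Δ := convex_convexHull ℝ _
  have hKconv : Convex ℝ (Δ - Δ) := hΔconv.sub hΔconv
  obtain ⟨f, hf⟩ := geometric_hahn_banach_open_point hKconv.interior isOpen_interior hqp
  have hfpos : 0 < f (q - p) := by
    have h0 := hf 0 h0K
    simpa using h0
  have hKle : ∀ y ∈ Δ - Δ, f y ≤ f (q - p) := by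
    intro y hy
    have hlim : Tendsto (fun t : ℝ => (1 - t) * f y) (𝓝[>] (0:ℝ)) (𝓝 (f y)) := by
      have hcont : Continuous fun t : ℝ => (1 - t) * f y :=
        (continuous_const.sub continuous_id).mul continuous_const
      have h1 := hcont.tendsto 0
      simp only [sub_zero, one_mul] at h1
      exact h1.mono_left nhdsWithin_le_nhds
    refine le_of_tendsto hlim ?_
    filter_upwards [Ioo_mem_nhdsGT_of_mem
      (⟨le_refl (0:ℝ), one_pos⟩ : (0:ℝ) ∈ Set.Ico (0:ℝ) 1)] with t htI
    have hmem : (1 - t) • y ∈ interior (Δ - Δ) := by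
      have h2 := hKconv.combo_closure_interior_mem_interior (subset_closure hy) h0K
        (by linarith [htI.2] : (0:ℝ) ≤ 1 - t) htI.1 (by ring)
      simpa using h2
    have h3 := hf _ hmem
    simp only [map_smul, smul_eq_mul] at h3
    exact h3.le
  have hτΔ : ∀ i, τ i ∈ Δ := fun i => subset_convexHull ℝ _ (Set.mem_range_self i)
  have hmax : ∀ b ∈ Δ, f b ≤ f q := by
    intro b hb
    have h4 := hKle (b - p) (Set.sub_mem_sub hb hp)
    simp only [map_sub] at h4
    linarith
  have hmin : ∀ b ∈ Δ, f p ≤ f b := by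
    intro b hb
    have h4 := hKle (q - b) (Set.sub_mem_sub hq hb)
    simp only [map_sub] at h4
    linarith
  have key : ∀ (g : Pt →L[ℝ] ℝ) (y : Pt), y ∈ Δ → (∀ i, g (τ i) ≤ g y) →
      (∃ i, y = τ i) ∨ ∃ i j : Fin 3, i ≠ j ∧ g (τ i) = g y ∧ g (τ j) = g y := by
    intro g y hyΔ hgc
    by_cases hpair : ∃ i j : Fin 3, i ≠ j ∧ g (τ i) = g y ∧ g (τ j) = g y
    · exact Or.inr hpair
    left
    push_neg at hpair
    rw [hΔ, Tri, convexHull_eq] at hyΔ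
    obtain ⟨ι, t, wt, zf, hw0, hw1, hz, hyc⟩ := hyΔ
    rw [Finset.centerMass_eq_of_sum_1 _ _ hw1] at hyc
    have hgy : ∑ i ∈ t, wt i * g (zf i) = g y := by
      rw [← hyc, map_sum]
      congr 1; ext i
      rw [map_smul, smul_eq_mul]
    have hle : ∀ i ∈ t, g (zf i) ≤ g y := by
      intro i hi
      obtain ⟨j, hj⟩ := hz i hi
      rw [← hj]; exact hgc j
    have hzero : ∀ i ∈ t, wt i * (g y - g (zf i)) = 0 := by
      have hsum : ∑ i ∈ t, wt i * (g y - g (zf i)) = 0 := by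
        have : ∑ i ∈ t, wt i * (g y - g (zf i))
            = (∑ i ∈ t, wt i) * g y - ∑ i ∈ t, wt i * g (zf i) := by
          rw [Finset.sum_mul, ← Finset.sum_sub_distrib]
          congr 1; ext i; ring
        rw [this, hw1, hgy, one_mul, sub_self]
      intro i hi
      have := (Finset.sum_eq_zero_iff_of_nonneg (fun i hi =>
        mul_nonneg (hw0 i hi) (sub_nonneg.mpr (hle i hi)))).mp hsum
      exact this i hi
    obtain ⟨i₀, hi₀t, hi₀⟩ : ∃ i ∈ t, wt i ≠ 0 := by
      by_contra hall
      push_neg at hall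
      rw [Finset.sum_eq_zero hall] at hw1
      norm_num at hw1
    obtain ⟨j₀, hj₀⟩ := hz i₀ hi₀t
    have hgj₀ : g (τ j₀) = g y := by
      have h5 := hzero i₀ hi₀t
      rcases mul_eq_zero.mp h5 with h | h
      · exact absurd h hi₀
      · rw [hj₀]; linarith [sub_eq_zero.mp h]
    refine ⟨j₀, ?_⟩
    have hterm : ∀ i ∈ t, wt i • zf i = wt i • τ j₀ := by
      intro i hi
      by_cases hwi : wt i = 0
      · rw [hwi, zero_smul, zero_smul]
      obtain ⟨j, hj⟩ := hz i hi
      have hgj : g (τ j) = g y := by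
        have h5 := hzero i hi
        rcases mul_eq_zero.mp h5 with h | h
        · exact absurd h hwi
        · rw [hj]; linarith [sub_eq_zero.mp h]
      have : j = j₀ := by
        by_contra hne
        exact hpair j j₀ hne hgj hgj₀
      rw [← hj, this]
    calc y = ∑ i ∈ t, wt i • zf i := hyc.symm
      _ = ∑ i ∈ t, wt i • τ j₀ := Finset.sum_congr rfl hterm
      _ = (∑ i ∈ t, wt i) • τ j₀ := by rw [Finset.sum_smul]
      _ = τ j₀ := by rw [hw1, one_smul]
  have hkq := key f q hq (fun i => hmax _ (hτΔ i))
  have hkp := key (-f) p hp (fun i => by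
    simp only [ContinuousLinearMap.neg_apply, neg_le_neg_iff]
    exact hmin _ (hτΔ i))
  rcases hkq with ⟨i, hi⟩ | ⟨i, j, hij, hgi, hgj⟩
  · exact ⟨i, Or.inr hi⟩
  rcases hkp with ⟨k, hk⟩ | ⟨k, l, hkl, hgk, hgl⟩
  · exact ⟨k, Or.inl hk⟩
  exfalso
  simp only [ContinuousLinearMap.neg_apply, neg_inj] at hgk hgl
  have pig : ∀ a b c d : Fin 3, a ≠ b → c ≠ d →
      a = c ∨ a = d ∨ b = c ∨ b = d := by decide
  have hcom : ∃ m : Fin 3, f (τ m) = f q ∧ f (τ m) = f p := by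
    rcases pig i j k l hij hkl with h | h | h | h
    · exact ⟨i, hgi, h ▸ hgk⟩
    · exact ⟨i, hgi, h ▸ hgl⟩
    · exact ⟨j, hgj, h ▸ hgk⟩
    · exact ⟨j, hgj, h ▸ hgl⟩
  obtain ⟨m, hm1, hm2⟩ := hcom
  have : f q = f p := by rw [← hm1, hm2]
  rw [map_sub] at hfpos
  linarith

lemma frontier_scaledTranslate (Δ : Set Pt) {r : ℝ} (hr : r ≠ 0) (w : Pt) :
    frontier (scaledTranslate Δ r w) = (fun x : Pt => r • x + w) '' frontier Δ := by
  have h : (fun x : Pt => r • x + w)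
      = ⇑((Homeomorph.smulOfNeZero r hr).trans (Homeomorph.addRight w)) := by
    funext x; rfl
  rw [scaledTranslate, h, Homeomorph.image_frontier]

end SmallestHomothetAux

/-- For distinct `u, v`, the set of scales `r > 0` for which some scaled
translate `r·Δ + w` has both `u` and `v` on its boundary attains a minimum `r*`, and for
every such minimal triangle at least one of `u, v` is a corner. -/
theorem smallest_homothet_has_corner
    (τ : Fin 3 → Pt) (hncol : ¬ Collinear ℝ (Set.range τ))
    (u v : Pt) (huv : u ≠ v) :
    ∃ rstar : ℝ,
      IsLeast { r : ℝ | 0 < r ∧ ∃ w : Pt,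
          u ∈ frontier (scaledTranslate (Tri τ) r w) ∧
          v ∈ frontier (scaledTranslate (Tri τ) r w) } rstar ∧
      ∀ w : Pt,
        u ∈ frontier (scaledTranslate (Tri τ) rstar w) →
        v ∈ frontier (scaledTranslate (Tri τ) rstar w) →
        ∃ i : Fin 3, u = rstar • τ i + w ∨ v = rstar • τ i + w := by
  classical
  have hconv : Convex ℝ (Tri τ) := convex_convexHull ℝ _
  have hcomp : IsCompact (Tri τ) := (Set.finite_range τ).isCompact_convexHull ℝ
  have hclosed : IsClosed (Tri τ) := hcomp.isClosed
  have haff : AffineIndependent ℝ τ := affineIndependent_iff_not_collinear.mpr hncol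
  have hspan : affineSpan ℝ (Set.range τ) = ⊤ := by
    rw [haff.affineSpan_eq_top_iff_card_eq_finrank_add_one]
    simp [finrank_euclideanSpace_fin]
  have hint : (interior (Tri τ)).Nonempty := by
    rw [hconv.interior_nonempty_iff_affineSpan_eq_top, Tri, affineSpan_convexHull]
    exact hspan
  set K : Set Pt := Tri τ - Tri τ with hK
  have hKconv : Convex ℝ K := hconv.sub hconv
  have hKcomp : IsCompact K := by
    rw [hK, sub_eq_add_neg]
    exact hcomp.add hcomp.neg
  have h0K : (0:Pt) ∈ interior K := by
    obtain ⟨z, hz⟩ := hint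
    have hopen : IsOpen (interior (Tri τ) + -(interior (Tri τ))) :=
      (isOpen_interior.neg).add_left
    have hsub : interior (Tri τ) + -(interior (Tri τ)) ⊆ K := by
      rw [hK, sub_eq_add_neg]
      exact Set.add_subset_add interior_subset (Set.neg_subset_neg.mpr interior_subset)
    have hmem : (0:Pt) ∈ interior (Tri τ) + -(interior (Tri τ)) :=
      ⟨z, hz, -z, Set.neg_mem_neg.mpr hz, by abel⟩
    exact interior_maximal hsub hopen hmem
  have h0Kn : K ∈ 𝓝 (0:Pt) := mem_interior_iff_mem_nhds.mp h0K
  have habs : Absorbent ℝ K := absorbent_nhds_zero h0Kn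
  have hvb : Bornology.IsVonNBounded ℝ K :=
    NormedSpace.isVonNBounded_of_isBounded _ hKcomp.isBounded
  set d : Pt := v - u with hd
  have hd0 : d ≠ 0 := sub_ne_zero.mpr (Ne.symm huv)
  set rstar : ℝ := gauge K d with hrstar
  have hrpos : 0 < rstar := (gauge_pos habs hvb).mpr hd0
  have hRiff : ∀ r : ℝ, (0 < r ∧ ∃ w : Pt,
      u ∈ frontier (scaledTranslate (Tri τ) r w) ∧
      v ∈ frontier (scaledTranslate (Tri τ) r w)) ↔ 0 < r ∧ rstar ≤ r := by
    intro r
    constructor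
    · rintro ⟨hr, w, hu, hv⟩
      rw [SmallestHomothetAux.frontier_scaledTranslate _ hr.ne' w] at hu hv
      obtain ⟨p, hpf, hpu⟩ := hu
      obtain ⟨q, hqf, hqv⟩ := hv
      have hpq : q - p ∈ K :=
        Set.sub_mem_sub (hclosed.frontier_subset hqf) (hclosed.frontier_subset hpf)
      have hdr : d = r • (q - p) := by
        rw [hd, ← hpu, ← hqv, smul_sub]; beta_reduce; abel
      refine ⟨hr, ?_⟩
      calc rstar = gauge K (r • (q - p)) := by rw [hrstar, hdr]
        _ = r * gauge K (q - p) := gauge_smul_of_nonneg hr.le _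
        _ ≤ r * 1 := mul_le_mul_of_nonneg_left (gauge_le_one_of_mem hpq) hr.le
        _ = r := mul_one r
    · rintro ⟨hr, hle⟩
      refine ⟨hr, ?_⟩
      set x : Pt := r⁻¹ • d with hx
      have hx0 : x ≠ 0 := smul_ne_zero (inv_ne_zero hr.ne') hd0
      have hxK : x ∈ K := by
        rw [SmallestHomothetAux.mem_iff_gauge_le_one hKconv hKcomp.isClosed h0Kn, hx,
          gauge_smul_of_nonneg (inv_nonneg.mpr hr.le)]
        calc r⁻¹ * gauge K d ≤ r⁻¹ * r :=
            mul_le_mul_of_nonneg_left hle (inv_nonneg.mpr hr.le)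
          _ = 1 := inv_mul_cancel₀ hr.ne'
      rw [hK, Set.mem_sub] at hxK
      obtain ⟨b, hb, a, ha, hba⟩ := hxK
      have hax : a + x ∈ Tri τ := by
        have hab : a + x = b := by rw [← hba]; abel
        rw [hab]; exact hb
      obtain ⟨p, hpf, hpxf⟩ :=
        SmallestHomothetAux.exists_frontier_rep hconv hcomp hint hx0 ha hax
      refine ⟨u - r • p, ?_, ?_⟩ <;>
        rw [SmallestHomothetAux.frontier_scaledTranslate _ hr.ne']
      · refine ⟨p, hpf, ?_⟩
        show r • p + (u - r • p) = u
        abel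
      · refine ⟨p + x, hpxf, ?_⟩
        show r • (p + x) + (u - r • p) = v
        have hrx : r • x = d := by rw [hx, smul_inv_smul₀ hr.ne']
        rw [smul_add, hrx, hd]; abel
  refine ⟨rstar, ⟨?_, ?_⟩, ?_⟩
  · exact (hRiff rstar).mpr ⟨hrpos, le_rfl⟩
  · intro r hr
    exact ((hRiff r).mp hr).2
  · intro w hu hv
    rw [SmallestHomothetAux.frontier_scaledTranslate _ hrpos.ne' w] at hu hv
    obtain ⟨p, hpf, hpu⟩ := hu
    obtain ⟨q, hqf, hqv⟩ := hv
    have hpΔ : p ∈ Tri τ := hclosed.frontier_subset hpf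
    have hqΔ : q ∈ Tri τ := hclosed.frontier_subset hqf
    have hdr : d = rstar • (q - p) := by
      rw [hd, ← hpu, ← hqv, smul_sub]; beta_reduce; abel
    have hg1 : gauge K (q - p) = 1 := by
      have h1 : rstar * gauge K (q - p) = rstar * 1 := by
        rw [mul_one]
        have h2 : gauge K (rstar • (q - p)) = rstar * gauge K (q - p) :=
          gauge_smul_of_nonneg hrpos.le _
        rw [← h2, ← hdr, ← hrstar]
      exact mul_left_cancel₀ hrpos.ne' h1
    have hnint : q - p ∉ interior K := by
      intro hmem
      rw [← gauge_lt_one_iff_mem_interior hKconv h0Kn, hg1] at hmem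
      exact lt_irrefl 1 hmem
    obtain ⟨i, hi⟩ := SmallestHomothetAux.vertex_of_not_interior τ hpΔ hqΔ h0K hnint
    refine ⟨i, ?_⟩
    rcases hi with h | h
    · exact Or.inl (by rw [← hpu, h])
    · exact Or.inr (by rw [← hqv, h])
end
end
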